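/- arXiv:solv-int/9610001 — 6 statements merged into one kernel-verified Lean document; each statement's English description precedes it below -/
import Mathlib

section
/- Let A and S be linear operators on g with A* = −A and S* = S, and let α ∈ ℝ. Then the pair of conditions {mYB(A;α), Hom(S,A)} holds if and only if the pair of conditions {mYB(A;α), mYB(A+S;α)} holds. -/
open Matrix

attribute [local instance] Matrix.normedAddCommGroup Matrix.normedSpace

/-- The trace form `⟨X,Y⟩ = trace (X⬝Y)` on `g = Matrix (Fin N) (Fin N) ℝ`. -/
noncomputable def tf {N : ℕ} (X Y : Matrix (Fin N) (Fin N) ℝ) : ℝ := (X * Y).trace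

/-- The modified Yang–Baxter equation mYB(R;α). -/
def mYB {N : ℕ} (R : Matrix (Fin N) (Fin N) ℝ →ₗ[ℝ] Matrix (Fin N) (Fin N) ℝ) (α : ℝ) : Prop :=
  ∀ X Y, R X * R Y - R Y * R X
    = R ((R X * Y - Y * R X) + (X * R Y - R Y * X)) - α • (X * Y - Y * X)

/-- The condition Hom(S,A). -/
def homc {N : ℕ} (S A : Matrix (Fin N) (Fin N) ℝ →ₗ[ℝ] Matrix (Fin N) (Fin N) ℝ) : Prop :=
  ∀ X Y, S X * S Y - S Y * S X = S ((A X * Y - Y * A X) + (X * A Y - A Y * X))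

/-!
Write `Q(x, y) = [Sx, Sy] - S([Ax, y] + [x, Ay])` for the defect of `Hom(S, A)`. Expanding
`mYB(A + S; α)` against `mYB(A; α)` leaves `Q + E = 0`, where `E` collects the terms mixing `A`
and `S`. For an invariant symmetric form, `⟨[x, y], z⟩` is cyclic in `x, y, z`; moving `A` and
`S` across the form with `A* = -A`, `S* = S` then gives
`⟨E(x, y), z⟩ + ⟨Q(y, z), x⟩ + ⟨Q(z, x), y⟩ = 0`.
So `Q = 0` forces `E = 0`. Conversely, if `Q = -E`, the three cyclic values `a, b, c` of
`⟨Q(·, ·), ·⟩` satisfy `a = b + c`, `b = c + a`, `c = a + b`, hence `2a = 0`; nondegeneracy of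
the form turns these scalar identities into `Q = 0`.
-/

open LinearMap (BilinForm)

attribute [local instance] LieRing.ofAssociativeRing

section QuadraticLieAlgebra

variable {K L : Type*} [CommRing K] [LieRing L] [LieAlgebra K L]

def mybDefect (R : Module.End K L) (α : K) (x y : L) : L :=
  ⁅R x, R y⁆ - (R (⁅R x, y⁆ + ⁅x, R y⁆) - α • ⁅x, y⁆)

def homDefect (S A : Module.End K L) (x y : L) : L :=
  ⁅S x, S y⁆ - S (⁅A x, y⁆ + ⁅x, A y⁆)

def crossDefect (A S : Module.End K L) (x y : L) : L :=
  ⁅A x, S y⁆ + ⁅S x, A y⁆ - (A + S) (⁅S x, y⁆ + ⁅x, S y⁆)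

lemma mybDefect_add (A S : Module.End K L) (α : K) (x y : L) :
    mybDefect (A + S) α x y = mybDefect A α x y + homDefect S A x y + crossDefect A S x y := by
  simp only [mybDefect, homDefect, crossDefect, LinearMap.add_apply, lie_add, add_lie, map_add]
  abel

variable {B : BilinForm K L}

lemma LinearMap.BilinForm.IsSymm.lie_apply_cyclic (hBs : B.IsSymm) (hBi : B.lieInvariant L)
    (x y z : L) : B ⁅x, y⁆ z = B ⁅z, x⁆ y := by
  rw [hBi, ← lie_skew, map_neg, neg_neg, hBs.eq]

variable {A S : Module.End K L}

lemma crossDefect_add_homDefect_cyclic (hBs : B.IsSymm) (hBi : B.lieInvariant L)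
    (hA : B.IsSkewAdjoint A) (hS : B.IsSelfAdjoint S) (x y z : L) :
    B (crossDefect A S x y) z + B (homDefect S A y z) x + B (homDefect S A z x) y = 0 := by
  have cyc := hBs.lie_apply_cyclic hBi
  simp only [crossDefect, homDefect, LinearMap.add_apply, map_add, map_sub, LinearMap.sub_apply,
    hA _ z, hS _ z, hS _ x, hS _ y, Pi.neg_apply, map_neg]
  linear_combination cyc (A x) (S y) z - cyc (A y) z (S x) - cyc y (A z) (S x)
    + cyc x (S y) (A z) - cyc (S x) y (S z) + cyc (S y) (S z) x

variable (hBs : B.IsSymm) (hBi : B.lieInvariant L) (hA : B.IsSkewAdjoint A)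
  (hS : B.IsSelfAdjoint S) (hB : B.SeparatingLeft)
include hBs hBi hA hS hB

lemma crossDefect_eq_zero_of_homDefect_eq_zero (h : ∀ x y, homDefect S A x y = 0) (x y : L) :
    crossDefect A S x y = 0 :=
  hB _ fun z => by
    simpa [h] using crossDefect_add_homDefect_cyclic hBs hBi hA hS x y z

lemma homDefect_eq_zero_of_add_crossDefect_eq_zero [IsAddTorsionFree K]
    (h : ∀ x y, homDefect S A x y + crossDefect A S x y = 0) (x y : L) :
    homDefect S A x y = 0 :=
  hB _ fun z => by
    have cyc (u v w : L) :
        B (homDefect S A u v) w = B (homDefect S A v w) u + B (homDefect S A w u) v := by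
      have := crossDefect_add_homDefect_cyclic hBs hBi hA hS u v w
      rw [eq_neg_of_add_eq_zero_right (h u v), map_neg, LinearMap.neg_apply] at this
      linear_combination -this
    rw [← two_nsmul_eq_zero, two_nsmul]
    linear_combination -cyc y z x - cyc z x y

theorem homDefect_eq_zero_iff_mybDefect_add_eq_zero [IsAddTorsionFree K] {α : K}
    (hmyb : ∀ x y, mybDefect A α x y = 0) :
    (∀ x y, homDefect S A x y = 0) ↔ ∀ x y, mybDefect (A + S) α x y = 0 := by
  simp only [mybDefect_add, hmyb, zero_add]
  refine ⟨fun h x y => ?_, homDefect_eq_zero_of_add_crossDefect_eq_zero hBs hBi hA hS hB⟩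
  rw [h, crossDefect_eq_zero_of_homDefect_eq_zero hBs hBi hA hS hB h, add_zero]

end QuadraticLieAlgebra

namespace Matrix

variable {n R : Type*} [Fintype n] [DecidableEq n] [CommRing R]

def traceForm : BilinForm R (Matrix n n R) :=
  (LinearMap.mul R (Matrix n n R)).compr₂ (traceLinearMap n R R)

@[simp]
lemma traceForm_apply (X Y : Matrix n n R) : traceForm X Y = (X * Y).trace :=
  rfl

lemma traceForm_isSymm : (traceForm : BilinForm R (Matrix n n R)).IsSymm :=
  ⟨fun X Y => trace_mul_comm X Y⟩

lemma traceForm_lieInvariant :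
    (traceForm : BilinForm R (Matrix n n R)).lieInvariant (Matrix n n R) := fun X Y Z => by
  simp only [traceForm_apply, Ring.lie_def, sub_mul, mul_sub, trace_sub, ← mul_assoc]
  linear_combination -trace_mul_cycle Y Z X

lemma traceForm_separatingLeft : (traceForm : BilinForm R (Matrix n n R)).SeparatingLeft :=
  fun X h => ext_iff_trace_mul_right.mpr fun Y => by simpa using h Y

end Matrix

lemma mYB_iff_mybDefect_eq_zero {N : ℕ} (R : Module.End ℝ (Matrix (Fin N) (Fin N) ℝ)) (α : ℝ) :
    mYB R α ↔ ∀ X Y, mybDefect R α X Y = 0 := by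
  simp only [mYB, mybDefect, Ring.lie_def, sub_eq_zero]

lemma homc_iff_homDefect_eq_zero {N : ℕ} (S A : Module.End ℝ (Matrix (Fin N) (Fin N) ℝ)) :
    homc S A ↔ ∀ X Y, homDefect S A X Y = 0 := by
  simp only [homc, homDefect, Ring.lie_def, sub_eq_zero]

theorem statement2_general (N : ℕ)
    (A S : Matrix (Fin N) (Fin N) ℝ →ₗ[ℝ] Matrix (Fin N) (Fin N) ℝ)
    (hA : ∀ X Y, tf (A X) Y = - tf X (A Y))
    (hS : ∀ X Y, tf (S X) Y = tf X (S Y))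
    (α : ℝ) :
    (mYB A α ∧ homc S A) ↔ (mYB A α ∧ mYB (A + S) α) := by
  have hA' : traceForm.IsSkewAdjoint A := fun X Y => by simpa [tf] using hA X Y
  have hS' : traceForm.IsSelfAdjoint S := fun X Y => by simpa [tf] using hS X Y
  rw [mYB_iff_mybDefect_eq_zero, mYB_iff_mybDefect_eq_zero, homc_iff_homDefect_eq_zero]
  exact and_congr_right fun hmyb => homDefect_eq_zero_iff_mybDefect_add_eq_zero
    traceForm_isSymm traceForm_lieInvariant hA' hS' traceForm_separatingLeft hmyb

theorem statement2 (N : ℕ) (hN : 1 ≤ N)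
    (A S : Matrix (Fin N) (Fin N) ℝ →ₗ[ℝ] Matrix (Fin N) (Fin N) ℝ)
    (hA : ∀ X Y, tf (A X) Y = - tf X (A Y))
    (hS : ∀ X Y, tf (S X) Y = tf X (S Y))
    (α : ℝ) :
    (mYB A α ∧ homc S A) ↔ (mYB A α ∧ mYB (A + S) α) :=
  statement2_general N A S hA hS α
end

section
/- Let φ : g → ℝ be C^∞ and Ad-invariant, i.e. φ(v⬝u⬝v⁻¹) = φ(u) for every u ∈ g and every invertible v ∈ g. Then u⬝∇φ(u) = ∇φ(u)⬝u for every u ∈ g; equivalently dφ(u) = d'φ(u) for all u. -/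
open Matrix

attribute [local instance] Matrix.normedAddCommGroup Matrix.normedSpace

/-- The gradient of a function `φ : g → ℝ` with respect to the trace form:
it satisfies `⟨∇φ(u), X⟩ = (fderiv ℝ φ u) X` for all `X`. -/
noncomputable def grad {N : ℕ} (φ : Matrix (Fin N) (Fin N) ℝ → ℝ)
    (u : Matrix (Fin N) (Fin N) ℝ) : Matrix (Fin N) (Fin N) ℝ :=
  Matrix.of fun i j => fderiv ℝ φ u (Matrix.single j i 1)

/-- `dφ(u) = u ⬝ ∇φ(u)` -/
noncomputable def dr {N : ℕ} (φ : Matrix (Fin N) (Fin N) ℝ → ℝ)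
    (u : Matrix (Fin N) (Fin N) ℝ) : Matrix (Fin N) (Fin N) ℝ := u * grad φ u

/-- `d'φ(u) = ∇φ(u) ⬝ u` -/
noncomputable def dl {N : ℕ} (φ : Matrix (Fin N) (Fin N) ℝ → ℝ)
    (u : Matrix (Fin N) (Fin N) ℝ) : Matrix (Fin N) (Fin N) ℝ := grad φ u * u

/-- Ad-invariance of `φ : g → ℝ`: `φ (v ⬝ u ⬝ v⁻¹) = φ u` for every invertible `v`. -/
def AdInvariant {N : ℕ} (φ : Matrix (Fin N) (Fin N) ℝ → ℝ) : Prop :=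
  ∀ (u v : Matrix (Fin N) (Fin N) ℝ), IsUnit v → φ (v * u * v⁻¹) = φ u

lemma grad_pair {N : ℕ} (φ : Matrix (Fin N) (Fin N) ℝ → ℝ)
    (u Y : Matrix (Fin N) (Fin N) ℝ) :
    fderiv ℝ φ u Y = ((grad φ u) * Y).trace := by
  conv_lhs => rw [matrix_eq_sum_single Y]
  rw [map_sum]
  simp only [map_sum]
  have : ∀ a b : Fin N, Matrix.single a b (Y a b) = Y a b • Matrix.single a b 1 := by
    intro a b; rw [smul_single]; norm_num
  simp only [this, _root_.map_smul]
  rw [Matrix.trace]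
  simp only [Matrix.diag, Matrix.mul_apply, grad, Matrix.of_apply, smul_eq_mul]
  rw [Finset.sum_comm]
  exact Finset.sum_congr rfl fun a _ => Finset.sum_congr rfl fun b _ => mul_comm _ _

lemma trace_eq_of_forall {N : ℕ} (A B : Matrix (Fin N) (Fin N) ℝ)
    (h : ∀ X, (A * X).trace = (B * X).trace) : A = B := by
  ext i j
  have := h (Matrix.single j i 1)
  simpa [Matrix.trace, Matrix.diag, Matrix.mul_apply, Matrix.single,
    ite_and, Finset.sum_ite_eq, Finset.sum_ite_eq'] using this

lemma swap_lemma {N : ℕ} {φ : Matrix (Fin N) (Fin N) ℝ → ℝ}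
    (hAd : AdInvariant φ) (v w : Matrix (Fin N) (Fin N) ℝ) (hv : IsUnit v) :
    φ (v * w) = φ (w * v) := by
  have h := hAd (w * v) v hv
  have hvv : v * v⁻¹ = 1 :=
    Matrix.mul_nonsing_inv v ((Matrix.isUnit_iff_isUnit_det v).mp hv)
  calc φ (v * w) = φ (v * (w * v) * v⁻¹) := by
        rw [show v * (w * v) * v⁻¹ = (v * w) * (v * v⁻¹) by noncomm_ring, hvv, mul_one]
    _ = φ (w * v) := h

lemma key_deriv {N : ℕ} {φ : Matrix (Fin N) (Fin N) ℝ → ℝ} (hφ : ContDiff ℝ (⊤ : ℕ∞) φ)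
    (hAd : AdInvariant φ) (u X : Matrix (Fin N) (Fin N) ℝ) :
    fderiv ℝ φ u (X * u) = fderiv ℝ φ u (u * X) := by
  have hdiff : Differentiable ℝ φ := hφ.differentiable (by simp)
  -- eventually, 1 + t • X is a unit
  have hunit : ∀ᶠ t : ℝ in nhds 0, IsUnit (1 + t • X) := by
    have hcont : Continuous fun t : ℝ => ((1 : Matrix (Fin N) (Fin N) ℝ) + t • X).det := by
      exact Continuous.matrix_det (by continuity)
    have h0 : ((1 : Matrix (Fin N) (Fin N) ℝ) + (0:ℝ) • X).det ≠ 0 := by simp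
    have := hcont.continuousAt (x := (0:ℝ)) |>.eventually_ne h0
    filter_upwards [this] with t ht
    exact (Matrix.isUnit_iff_isUnit_det _).mpr (isUnit_iff_ne_zero.mpr ht)
  have heq : (fun t : ℝ => φ (u + t • (X * u))) =ᶠ[nhds 0]
      (fun t : ℝ => φ (u + t • (u * X))) := by
    filter_upwards [hunit] with t ht
    have := swap_lemma hAd (1 + t • X) u ht
    have h1 : (1 + t • X) * u = u + t • (X * u) := by
      rw [add_mul, one_mul, smul_mul_assoc]
    have h2 : u * (1 + t • X) = u + t • (u * X) := by
      rw [mul_add, mul_one, mul_smul_comm]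
    rw [h1, h2] at this
    exact this
  have line : ∀ a : Matrix (Fin N) (Fin N) ℝ,
      HasDerivAt (fun t : ℝ => φ (u + t • a)) (fderiv ℝ φ u a) 0 := by
    intro a
    have h1 : HasDerivAt (fun t : ℝ => u + t • a) a 0 := by
      have := ((hasDerivAt_id (0:ℝ)).smul_const a).const_add u; rwa [one_smul] at this
    have h2 : HasFDerivAt φ (fderiv ℝ φ u) (u + (0:ℝ) • a) := by
      simpa using (hdiff u).hasFDerivAt
    exact h2.comp_hasDerivAt 0 h1
  have hA := line (X * u)
  have hB := (line (u * X)).congr_of_eventuallyEq heq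
  exact hA.unique hB

theorem statement3 (N : ℕ) (hN : 1 ≤ N)
    (φ : Matrix (Fin N) (Fin N) ℝ → ℝ) (hφ : ContDiff ℝ (⊤ : ℕ∞) φ)
    (hAd : AdInvariant φ) :
    ∀ u : Matrix (Fin N) (Fin N) ℝ,
      u * grad φ u = grad φ u * u ∧ dr φ u = dl φ u := by
  intro u
  have key : ∀ X, (u * grad φ u * X).trace = (grad φ u * u * X).trace := by
    intro X
    have h := key_deriv hφ hAd u X
    rw [grad_pair, grad_pair] at h
    calc (u * grad φ u * X).trace = (grad φ u * (X * u)).trace := by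
          rw [← Matrix.trace_mul_cycle, mul_assoc]
      _ = (grad φ u * (u * X)).trace := h
      _ = (grad φ u * u * X).trace := by rw [mul_assoc]
  have hmain : u * grad φ u = grad φ u * u := trace_eq_of_forall _ _ key
  exact ⟨hmain, by simpa [dr, dl] using hmain⟩
end

section
/- Let A, B, C, D be linear operators on g with A + B = C + D = R. Then: (i) any two C^∞ Ad-invariant functions φ, ψ : g → ℝ are in involution with respect to PB(A,B,C,D), i.e. {φ,ψ}(u) = 0 for all u ∈ g; (ii) for any C^∞ Ad-invariant function φ and any matrix positions a, b, the Hamiltonian vector field of φ takes the Lax form: {φ, e_{ab}}(u) = ([u, R(dφ(u))])_{ab} for all u ∈ g, where e_{ab} is the coordinate function e_{ab}(u) = u_{ab} and [X,Y] = X⬝Y − Y⬝X. -/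
open Matrix

attribute [local instance] Matrix.normedAddCommGroup Matrix.normedSpace

/-- The quadratic bracket PB(A,B,C,D). -/
noncomputable def pb {N : ℕ}
    (A B C D : Matrix (Fin N) (Fin N) ℝ →ₗ[ℝ] Matrix (Fin N) (Fin N) ℝ)
    (φ ψ : Matrix (Fin N) (Fin N) ℝ → ℝ) (u : Matrix (Fin N) (Fin N) ℝ) : ℝ :=
  tf (A (dl φ u)) (dl ψ u) - tf (D (dr φ u)) (dr ψ u)
    + tf (B (dr φ u)) (dl ψ u) - tf (C (dl φ u)) (dr ψ u)

section Aux

variable {N : ℕ}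

/-- The coordinate function `w ↦ w a b` as a linear map. -/
def entryLM (a b : Fin N) : Matrix (Fin N) (Fin N) ℝ →ₗ[ℝ] ℝ where
  toFun w := w a b
  map_add' _ _ := rfl
  map_smul' _ _ := rfl

lemma hasDerivAt_matrix {f : ℝ → Matrix (Fin N) (Fin N) ℝ} {f' : Matrix (Fin N) (Fin N) ℝ} {t : ℝ} :
    HasDerivAt f f' t ↔ ∀ i j, HasDerivAt (fun s => f s i j) (f' i j) t := by
  constructor
  · intro h i j; exact hasDerivAt_pi.1 (hasDerivAt_pi.1 h i) j
  · intro h; exact hasDerivAt_pi.2 fun i => hasDerivAt_pi.2 fun j => h i j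

lemma HasDerivAt.matrix_mul' {f g : ℝ → Matrix (Fin N) (Fin N) ℝ}
    {f' g' : Matrix (Fin N) (Fin N) ℝ} {t : ℝ}
    (hf : HasDerivAt f f' t) (hg : HasDerivAt g g' t) :
    HasDerivAt (fun s => f s * g s) (f' * g t + f t * g') t := by
  rw [hasDerivAt_matrix] at *
  intro i j
  simp only [Matrix.mul_apply, Matrix.add_apply]
  have h := HasDerivAt.fun_sum (u := Finset.univ) (x := t)
    (A := fun k s => f s i k * g s k j)
    (A' := fun k => f' i k * g t k j + f t i k * g' k j)
    (fun k _ => (hf i k).mul (hg k j))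
  convert h using 1
  · rfl
  · rfl
  rw [Finset.sum_add_distrib]

lemma tf_grad (φ : Matrix (Fin N) (Fin N) ℝ → ℝ) (u Y : Matrix (Fin N) (Fin N) ℝ) :
    tf (grad φ u) Y = fderiv ℝ φ u Y := by
  conv_rhs => rw [matrix_eq_sum_single Y]
  rw [map_sum]
  simp only [tf, Matrix.trace, Matrix.diag, Matrix.mul_apply, grad, Matrix.of_apply]
  rw [Finset.sum_comm]
  congr 1
  ext i
  rw [map_sum]
  congr 1
  ext j
  have : Matrix.single i j (Y i j) = (Y i j) • Matrix.single i j (1:ℝ) := by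
    rw [Matrix.smul_single, smul_eq_mul, mul_one]
  rw [this, (fderiv ℝ φ u).map_smul, smul_eq_mul, mul_comm]

lemma key (φ : Matrix (Fin N) (Fin N) ℝ → ℝ) (hφ : ContDiff ℝ (⊤ : ℕ∞) φ) (hinv : AdInvariant φ)
    (u X : Matrix (Fin N) (Fin N) ℝ) : fderiv ℝ φ u (X * u - u * X) = 0 := by
  set f : ℝ → Matrix (Fin N) (Fin N) ℝ := fun t => 1 + t • X with hf
  set g : ℝ → Matrix (Fin N) (Fin N) ℝ := fun t => (f t)⁻¹ with hg
  have hfc : Continuous f := by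
    apply continuous_matrix
    intro i j
    simp only [hf, Matrix.add_apply, Matrix.smul_apply, smul_eq_mul]
    fun_prop
  have hdetc : Continuous fun t => (f t).det := hfc.matrix_det
  have hdet0 : (f 0).det = 1 := by simp [hf]
  have hev : ∀ᶠ t in nhds (0:ℝ), (f t).det ≠ 0 := by
    apply hdetc.continuousAt.eventually_ne
    rw [hdet0]; exact one_ne_zero
  have hgc : ContinuousAt g 0 := by
    have : g = fun t => (Ring.inverse (f t).det) • (f t).adjugate := by
      funext t; rw [hg]; exact Matrix.inv_def (f t)
    rw [this]
    apply ContinuousAt.fun_smul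
    · have : ContinuousAt (fun t => ((f t).det)⁻¹) 0 :=
        hdetc.continuousAt.inv₀ (by rw [hdet0]; exact one_ne_zero)
      simpa [Ring.inverse_eq_inv'] using this
    · exact (hfc.matrix_adjugate).continuousAt
  have hg0 : g 0 = 1 := by
    rw [hg]
    simp only [hf, zero_smul, add_zero]
    rw [Matrix.inv_def]
    simp
  have hgd : HasDerivAt g (-X) 0 := by
    refine hasDerivAt_iff_tendsto_slope.2 ?_
    have hslope : ∀ᶠ t in nhdsWithin (0:ℝ) {(0:ℝ)}ᶜ, slope g 0 t = -(g t * X) := by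
      filter_upwards [nhdsWithin_le_nhds hev, self_mem_nhdsWithin] with t hdet ht
      have hti : g t * f t = 1 := Matrix.nonsing_inv_mul (f t) (isUnit_iff_ne_zero.2 hdet)
      have h1 : g t - 1 = (-t) • (g t * X) := by
        calc g t - 1 = g t - g t * f t := by rw [hti]
          _ = g t * (1 - f t) := by rw [Matrix.mul_sub, Matrix.mul_one]
          _ = g t * ((-t) • X) := by rw [hf]; congr 1; module
          _ = (-t) • (g t * X) := by rw [Matrix.mul_smul]
      have ht0 : t ≠ 0 := ht
      rw [slope_def_module, hg0, sub_zero, h1, smul_smul]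
      rw [show t⁻¹ * -t = -1 by field_simp]
      module
    apply Filter.Tendsto.congr' (Filter.EventuallyEq.symm hslope)
    have : Filter.Tendsto (fun t => -(g t * X)) (nhds (0:ℝ)) (nhds (-X)) := by
      have h1 : ContinuousAt (fun t => -(g t * X)) 0 := by
        apply ContinuousAt.neg
        have hm : Continuous (fun M : Matrix (Fin N) (Fin N) ℝ => M * X) :=
          continuous_id.matrix_mul continuous_const
        exact (hm.continuousAt.comp hgc : ContinuousAt (fun t => g t * X) 0)
      have := h1.tendsto
      simpa [hg0] using this
    exact this.mono_left nhdsWithin_le_nhds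
  have hfd : HasDerivAt f X 0 := by
    have : HasDerivAt (fun t : ℝ => t • X) ((1:ℝ) • X) 0 := (hasDerivAt_id 0).smul_const X
    have h2 := this.const_add (1 : Matrix (Fin N) (Fin N) ℝ)
    rw [one_smul] at h2
    exact h2
  have hfud : HasDerivAt (fun t => f t * u) (X * u) 0 :=
    by simpa [hf] using hfd.matrix_mul' (hasDerivAt_const 0 u)
  have hcd : HasDerivAt (fun t => f t * u * g t) (X * u - u * X) 0 := by
    have := hfud.matrix_mul' hgd
    simp only [hf, hg0] at this ⊢
    convert this using 1
    simp [Matrix.mul_one, sub_eq_add_neg, Matrix.mul_neg]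
  have hconst : ∀ᶠ t in nhds (0:ℝ), φ (f t * u * g t) = φ u := by
    filter_upwards [hev] with t hdet
    exact hinv u (f t) ((Matrix.isUnit_iff_isUnit_det (f t)).2 (isUnit_iff_ne_zero.2 hdet))
  have hφd : HasFDerivAt φ (fderiv ℝ φ u) u :=
    (hφ.differentiable (by simp) u).hasFDerivAt
  have h0 : f 0 * u * g 0 = u := by simp [hf, hg0]
  have hcomp : HasDerivAt (fun t => φ (f t * u * g t)) (fderiv ℝ φ u (X * u - u * X)) 0 := by
    have hφd' : HasFDerivAt φ (fderiv ℝ φ u) (f 0 * u * g 0) := by rwa [h0]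
    exact hφd'.comp_hasDerivAt 0 hcd
  have hzero : HasDerivAt (fun t => φ (f t * u * g t)) 0 0 :=
    (hasDerivAt_const 0 (φ u)).congr_of_eventuallyEq hconst
  exact hcomp.unique hzero

lemma trace_mul_stdBasis (M : Matrix (Fin N) (Fin N) ℝ) (i j : Fin N) :
    (M * Matrix.single j i 1).trace = M i j := by
  simp [Matrix.trace, Matrix.diag, Matrix.mul_apply, Matrix.single, ite_and,
    Finset.sum_ite_eq, Finset.sum_ite_eq']

lemma dl_eq_dr (φ : Matrix (Fin N) (Fin N) ℝ → ℝ) (hφ : ContDiff ℝ (⊤ : ℕ∞) φ) (hinv : AdInvariant φ)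
    (u : Matrix (Fin N) (Fin N) ℝ) : dl φ u = dr φ u := by
  have hcomm : ∀ X, ((u * grad φ u - grad φ u * u) * X).trace = 0 := by
    intro X
    have h := key φ hφ hinv u X
    rw [← tf_grad] at h
    have expand : tf (grad φ u) (X * u - u * X)
        = ((u * grad φ u - grad φ u * u) * X).trace := by
      simp only [tf, Matrix.mul_sub, Matrix.sub_mul, Matrix.trace_sub]
      rw [← Matrix.mul_assoc, ← Matrix.mul_assoc]
      rw [Matrix.trace_mul_comm (grad φ u * X) u, Matrix.mul_assoc u, Matrix.mul_assoc]
    rw [expand] at h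
    exact h
  have : u * grad φ u - grad φ u * u = 0 := by
    ext i j
    have := hcomm (Matrix.single j i 1)
    rw [trace_mul_stdBasis] at this
    simpa using this
  have h2 : u * grad φ u = grad φ u * u := by
    have := sub_eq_zero.mp this
    exact this
  simp [dl, dr, h2]

lemma tf_map_add (A B : Matrix (Fin N) (Fin N) ℝ →ₗ[ℝ] Matrix (Fin N) (Fin N) ℝ)
    (X Y : Matrix (Fin N) (Fin N) ℝ) : tf (A X) Y + tf (B X) Y = tf ((A + B) X) Y := by
  simp [tf, Matrix.add_mul]

end Aux

theorem statement4 (N : ℕ) (hN : 1 ≤ N)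
    (A B C D R : Matrix (Fin N) (Fin N) ℝ →ₗ[ℝ] Matrix (Fin N) (Fin N) ℝ)
    (hsum1 : A + B = R) (hsum2 : C + D = R) :
    -- (i) Ad-invariant functions are in involution
    (∀ φ ψ, ContDiff ℝ (⊤ : ℕ∞) φ → ContDiff ℝ (⊤ : ℕ∞) ψ → AdInvariant φ → AdInvariant ψ →
      ∀ u, pb A B C D φ ψ u = 0)
    -- (ii) the Hamiltonian vector field of an Ad-invariant function takes the Lax form
    ∧ (∀ φ, ContDiff ℝ (⊤ : ℕ∞) φ → AdInvariant φ → ∀ (a b : Fin N) (u : Matrix (Fin N) (Fin N) ℝ),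
        pb A B C D φ (fun w => w a b) u
          = (u * R (dr φ u) - R (dr φ u) * u) a b) := by
  constructor
  · intro φ ψ hφ hψ hφi hψi u
    have h1 : dl φ u = dr φ u := dl_eq_dr φ hφ hφi u
    have h2 : dl ψ u = dr ψ u := dl_eq_dr ψ hψ hψi u
    simp only [pb, h1, h2]
    have := tf_map_add A B (dr φ u) (dr ψ u)
    have h3 := tf_map_add C D (dr φ u) (dr ψ u)
    rw [hsum1] at this
    rw [hsum2] at h3
    linarith
  · intro φ hφ hφi a b u
    have h1 : dl φ u = dr φ u := dl_eq_dr φ hφ hφi u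
    -- gradient of the coordinate function
    have hgrad : grad (fun w : Matrix (Fin N) (Fin N) ℝ => w a b) u
        = Matrix.single b a 1 := by
      have hfder : fderiv ℝ (fun w : Matrix (Fin N) (Fin N) ℝ => w a b) u
          = (entryLM a b (N := N)).toContinuousLinearMap := by
        apply HasFDerivAt.fderiv
        exact (entryLM a b (N := N)).toContinuousLinearMap.hasFDerivAt
      ext i j
      simp only [grad, Matrix.of_apply, hfder, LinearMap.coe_toContinuousLinearMap', entryLM,
        LinearMap.coe_mk, AddHom.coe_mk]
      simp [Matrix.single, and_comm, eq_comm]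
      change _ = (if i = b ∧ j = a then (1:ℝ) else 0)
      grind
    have hE : ∀ Z : Matrix (Fin N) (Fin N) ℝ,
        tf Z (Matrix.single b a 1 * u) = (u * Z) a b := by
      intro Z
      rw [tf, ← Matrix.mul_assoc, Matrix.trace_mul_comm, ← Matrix.mul_assoc]
      exact trace_mul_stdBasis (u * Z) a b
    have hE' : ∀ Z : Matrix (Fin N) (Fin N) ℝ,
        tf Z (u * Matrix.single b a 1) = (Z * u) a b := by
      intro Z
      rw [tf, ← Matrix.mul_assoc]
      exact trace_mul_stdBasis (Z * u) a b
    have hdlψ : dl (fun w : Matrix (Fin N) (Fin N) ℝ => w a b) u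
        = Matrix.single b a 1 * u := by rw [dl, hgrad]
    have hdrψ : dr (fun w : Matrix (Fin N) (Fin N) ℝ => w a b) u
        = u * Matrix.single b a 1 := by rw [dr, hgrad]
    have hAB := tf_map_add A B (dr φ u) (Matrix.single b a 1 * u)
    have hCD := tf_map_add C D (dr φ u) (u * Matrix.single b a 1)
    rw [hsum1] at hAB
    rw [hsum2] at hCD
    rw [pb, hdlψ, hdrψ, h1]
    have key2 : tf (R (dr φ u)) (Matrix.single b a 1 * u)
        - tf (R (dr φ u)) (u * Matrix.single b a 1)
        = (u * R (dr φ u) - R (dr φ u) * u) a b := by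
      rw [hE, hE', Matrix.sub_apply]
    linarith [hAB, hCD, key2]
end

section
/- Let n ≥ 1 and let 𝐀 be a linear operator on 𝐠 = Fin n → g with blocks A_{ij} satisfying the skew-symmetry (A_{ij})* = −A_{ji} for all i, j. Then for α ∈ ℝ, the condition mYB(𝐀;α) on the algebra 𝐠 (with componentwise multiplication and commutator) holds if and only if all of the following hold: (1) mYB(A_{jj};α) for every j; (2) Hom(A_{ij}, A_{jj}) for every pair i ≠ j; (3) Aux(A_{ij}, A_{ik}; A_{kj}, A_{jk}) for every triple i < j < k. -/
open Matrix

attribute [local instance] Matrix.normedAddCommGroup Matrix.normedSpace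

/-- The condition Aux(P,Q;R,S): `[P(X),Q(Y)] = Q([R(X),Y]) + P([X,S(Y)])`. -/
def aux {N : ℕ} (P Q R S : Matrix (Fin N) (Fin N) ℝ →ₗ[ℝ] Matrix (Fin N) (Fin N) ℝ) : Prop :=
  ∀ X Y, P X * Q Y - Q Y * P X = Q (R X * Y - Y * R X) + P (X * S Y - S Y * X)

/-- The operator on `𝐠 = Fin n → g` encoded by the blocks `A i j`:
`(𝐀 u)_i = Σ_j A_{ij}(u_j)`. -/
noncomputable def opApp {N n : ℕ}
    (A : Fin n → Fin n → (Matrix (Fin N) (Fin N) ℝ →ₗ[ℝ] Matrix (Fin N) (Fin N) ℝ))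
    (X : Fin n → Matrix (Fin N) (Fin N) ℝ) : Fin n → Matrix (Fin N) (Fin N) ℝ :=
  fun i => ∑ j, A i j (X j)

/-- The modified Yang–Baxter equation mYB(𝐀;α) on the direct sum `𝐠 = Fin n → g`
(with componentwise multiplication), for the operator encoded by blocks `A i j`. -/
def mYBbig {N n : ℕ}
    (A : Fin n → Fin n → (Matrix (Fin N) (Fin N) ℝ →ₗ[ℝ] Matrix (Fin N) (Fin N) ℝ))
    (α : ℝ) : Prop :=
  ∀ X Y : Fin n → Matrix (Fin N) (Fin N) ℝ,
    opApp A X * opApp A Y - opApp A Y * opApp A X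
      = opApp A ((opApp A X * Y - Y * opApp A X) + (X * opApp A Y - opApp A Y * X))
        - α • (X * Y - Y * X)

/-- The condition Hom(𝐂,𝐀) on the direct sum `𝐠 = Fin n → g`, for operators
encoded by blocks. -/
def homBig {N n : ℕ}
    (C A : Fin n → Fin n → (Matrix (Fin N) (Fin N) ℝ →ₗ[ℝ] Matrix (Fin N) (Fin N) ℝ)) : Prop :=
  ∀ X Y : Fin n → Matrix (Fin N) (Fin N) ℝ,
    opApp C X * opApp C Y - opApp C Y * opApp C X
      = opApp C ((opApp A X * Y - Y * opApp A X) + (X * opApp A Y - opApp A Y * X))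

section micro
variable {N : ℕ} (a b c : Matrix (Fin N) (Fin N) ℝ)

lemma tf_sub_left : tf (a - b) c = tf a c - tf b c := by simp [tf, sub_mul]
lemma tf_add_left : tf (a + b) c = tf a c + tf b c := by simp [tf, add_mul]
lemma tf_sub_right : tf a (b - c) = tf a b - tf a c := by simp [tf, mul_sub]
lemma tf_add_right : tf a (b + c) = tf a b + tf a c := by simp [tf, mul_add]
lemma tf_smul_left (r : ℝ) : tf (r • a) b = r * tf a b := by simp [tf]
lemma tf_smul_right (r : ℝ) : tf a (r • b) = r * tf a b := by simp [tf]

lemma tfb : tf (a * b - b * a) c = tf a (b * c - c * b) := by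
  simp only [tf, mul_sub, sub_mul, Matrix.trace_sub, mul_assoc]
  rw [Matrix.trace_mul_comm b (a*c), mul_assoc]

lemma tf_nondeg {M : Matrix (Fin N) (Fin N) ℝ} (h : ∀ y, tf M y = 0) : M = 0 := by
  ext i j
  have := h (Matrix.single j i 1)
  simp [tf, Matrix.trace, Matrix.mul_apply, Matrix.single, Matrix.diag, ite_and, Finset.sum_ite_eq, Finset.sum_ite_eq'] at this
  simpa using this
end micro

section ec
variable {N : ℕ}
abbrev Opr (N : ℕ) := Matrix (Fin N) (Fin N) ℝ →ₗ[ℝ] Matrix (Fin N) (Fin N) ℝ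

def Ecnd (P Q R S : Opr N) (c : ℝ) : Prop :=
  ∀ x y, P x * Q y - Q y * P x
    = Q (R x * y - y * R x) + P (x * S y - S y * x) - c • (x * y - y * x)

lemma Ecnd.swap {P Q R S : Opr N} {c : ℝ} (h : Ecnd P Q R S c) : Ecnd Q P S R c := by
  intro x y
  have h' := h y x
  rw [← neg_sub (P y * Q x), h']
  simp only [map_sub, smul_sub, neg_sub, neg_add, sub_neg_eq_add]
  abel

lemma Ecnd.dual {P Pd Q Qd R S : Opr N} {c : ℝ}
    (hQd : ∀ X Y, tf (Qd X) Y = - tf X (Q Y))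
    (hPd : ∀ X Y, tf (Pd X) Y = - tf X (P Y))
    (hR : ∀ X Y, tf (R X) Y = - tf X (S Y))
    (h : Ecnd P Q R S c) : Ecnd Qd R Pd P c := by
  intro z x
  rw [← sub_eq_zero]
  apply tf_nondeg
  intro y
  have t1 : tf (Qd z * R x - R x * Qd z) y = - tf z (Q (R x * y - y * R x)) := by
    rw [tfb, hQd]
  have t2 : tf (R (Pd z * x - x * Pd z)) y = tf z (P (x * S y - S y * x)) := by
    rw [hR, tfb, hPd, neg_neg]
  have t3 : tf (Qd (z * P x - P x * z)) y = - tf z (P x * Q y - Q y * P x) := by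
    rw [hQd, tfb]
  have t4 : tf (c • (z * x - x * z)) y = c * tf z (x * y - y * x) := by
    rw [tf_smul_left, tfb]
  have hz := congrArg (tf z) (h x y)
  simp only [tf_sub_left, tf_add_left, tf_sub_right, tf_add_right, tf_smul_right,
    tf_smul_left] at t1 t2 t3 t4 hz ⊢
  linarith

variable {n : ℕ}

lemma opApp_single {N : ℕ} (A : Fin n → Fin n → Opr N) (p : Fin n)
    (x : Matrix (Fin N) (Fin N) ℝ) (i : Fin n) :
    opApp A (Pi.single p x) i = A i p x := by
  simp [opApp, Pi.single_apply, apply_ite (A i _), Finset.sum_ite_eq]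

lemma opApp_apply {N : ℕ} (A : Fin n → Fin n → Opr N)
    (X : Fin n → Matrix (Fin N) (Fin N) ℝ) (i : Fin n) :
    opApp A X i = ∑ j, A i j (X j) := rfl

lemma opApp_single_pair {N : ℕ} (A : Fin n → Fin n → Opr N) (p q : Fin n)
    (x y : Matrix (Fin N) (Fin N) ℝ) (i : Fin n) :
    opApp A ((opApp A (Pi.single p x) * Pi.single q y
        - Pi.single q y * opApp A (Pi.single p x))
      + (Pi.single p x * opApp A (Pi.single q y)
        - opApp A (Pi.single q y) * Pi.single p x)) i
    = A i q (A q p x * y - y * A q p x) + A i p (x * A p q y - A p q y * x) := by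
  rw [opApp_apply]
  simp only [Pi.add_apply, Pi.sub_apply, Pi.mul_apply, opApp_single, map_add]
  rw [Finset.sum_add_distrib]
  congr 1
  · rw [Finset.sum_eq_single q]
    · rw [Pi.single_eq_same]
    · intro b _ hb; rw [Pi.single_eq_of_ne hb]; simp
    · simp
  · rw [Finset.sum_eq_single p]
    · rw [Pi.single_eq_same]
    · intro b _ hb; rw [Pi.single_eq_of_ne hb]; simp
    · simp

lemma big_iff {N : ℕ} (A : Fin n → Fin n → Opr N) (α : ℝ) :
    mYBbig A α ↔ ∀ i p q, Ecnd (A i p) (A i q) (A q p) (A p q)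
      (if i = p ∧ i = q then α else 0) := by
  constructor
  · intro h i p q x y
    have h0 := congrFun (h (Pi.single p x) (Pi.single q y)) i
    simp only [Pi.sub_apply, Pi.add_apply, Pi.mul_apply, Pi.smul_apply] at h0
    rw [opApp_single, opApp_single, opApp_single_pair] at h0
    rw [h0]
    congr 1
    by_cases hp : i = p
    · subst hp
      by_cases hq : i = q
      · subst hq; simp
      · simp [Pi.single_eq_of_ne hq, hq]
    · simp [Pi.single_eq_of_ne hp, hp]
  · intro hE X Y
    funext i
    have c0 : ∀ (f : Fin n → Fin n → Matrix (Fin N) (Fin N) ℝ),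
        (∑ p, ∑ q, (if i = p ∧ i = q then α else 0) • f p q) = α • f i i := by
      intro f
      rw [Finset.sum_eq_single i]
      · simp [Finset.sum_ite_eq]
      · intro b _ hb
        have : i ≠ b := fun e => hb e.symm
        simp [this]
      · simp
    have key : (∑ p, ∑ q, (A i p (X p) * A i q (Y q) - A i q (Y q) * A i p (X p)))
        = ∑ p, ∑ q, (A i q (A q p (X p) * Y q - Y q * A q p (X p))
            + A i p (X p * A p q (Y q) - A p q (Y q) * X p)
            - (if i = p ∧ i = q then α else 0) • (X p * Y q - Y q * X p)) :=
      Finset.sum_congr rfl fun p _ => Finset.sum_congr rfl fun q _ => hE i p q (X p) (Y q)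
    simp only [Finset.sum_sub_distrib, Finset.sum_add_distrib] at key
    rw [c0 (fun p q => X p * Y q - Y q * X p)] at key
    have g1 : opApp A X i * opApp A Y i = ∑ p, ∑ q, A i p (X p) * A i q (Y q) := by
      rw [opApp_apply, opApp_apply, Finset.sum_mul_sum]
    have g2 : opApp A Y i * opApp A X i = ∑ p, ∑ q, A i q (Y q) * A i p (X p) := by
      rw [opApp_apply, opApp_apply, Finset.sum_mul_sum, Finset.sum_comm]
    have g3 : opApp A ((opApp A X * Y - Y * opApp A X) + (X * opApp A Y - opApp A Y * X)) i
        = (∑ p, ∑ q, A i q (A q p (X p) * Y q - Y q * A q p (X p)))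
          + ∑ p, ∑ q, A i p (X p * A p q (Y q) - A p q (Y q) * X p) := by
      rw [opApp_apply]
      simp only [Pi.add_apply, Pi.sub_apply, Pi.mul_apply, opApp_apply,
        Finset.sum_mul, Finset.mul_sum, ← Finset.sum_sub_distrib, map_add, map_sum]
      rw [Finset.sum_add_distrib]
      congr 1
      exact Finset.sum_comm
    simp only [Pi.sub_apply, Pi.add_apply, Pi.mul_apply, Pi.smul_apply]
    rw [g1, g2, g3]
    exact key
end ec


theorem statement5 (N n : ℕ) (hN : 1 ≤ N) (hn : 1 ≤ n)
    (A : Fin n → Fin n → (Matrix (Fin N) (Fin N) ℝ →ₗ[ℝ] Matrix (Fin N) (Fin N) ℝ))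
    (hskew : ∀ i j X Y, tf (A i j X) Y = - tf X (A j i Y))
    (α : ℝ) :
    mYBbig A α ↔
      ((∀ j, mYB (A j j) α)
        ∧ (∀ i j, i ≠ j → homc (A i j) (A j j))
        ∧ (∀ i j k, i < j → j < k → aux (A i j) (A i k) (A k j) (A j k))) := by
  rw [big_iff A α]
  have hdual : ∀ (i p q : Fin n) (c : ℝ),
      Ecnd (A i p) (A i q) (A q p) (A p q) c →
      Ecnd (A q i) (A q p) (A p i) (A i p) c :=
    fun i p q c h => Ecnd.dual (hskew q i) (hskew p i) (hskew q p) h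
  constructor
  · intro h
    refine ⟨fun j X Y => ?_, fun i j hij X Y => ?_, fun i j k hij hjk X Y => ?_⟩
    · have hh := h j j j
      rw [if_pos (⟨rfl, rfl⟩ : j = j ∧ j = j)] at hh
      rw [hh X Y, map_add]
    · have hh := h i j j
      rw [if_neg (by simp [hij])] at hh
      have := hh X Y
      rw [zero_smul, sub_zero, ← map_add] at this
      exact this
    · have hh := h i j k
      rw [if_neg (by rintro ⟨e, _⟩; exact hij.ne e)] at hh
      have := hh X Y
      rwa [zero_smul, sub_zero] at this
  · rintro ⟨h1, h2, h3⟩ i p q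
    have E1 : ∀ j, Ecnd (A j j) (A j j) (A j j) (A j j) α := by
      intro j X Y
      rw [← map_add]
      exact h1 j X Y
    have E2 : ∀ a b, a ≠ b → Ecnd (A a b) (A a b) (A b b) (A b b) 0 := by
      intro a b hab X Y
      rw [zero_smul, sub_zero, ← map_add]
      exact h2 a b hab X Y
    have E3 : ∀ a b c, a < b → b < c → Ecnd (A a b) (A a c) (A c b) (A b c) 0 := by
      intro a b c hab hbc X Y
      rw [zero_smul, sub_zero]
      exact h3 a b c hab hbc X Y
    by_cases hip : i = p
    · by_cases hiq : i = q
      · subst hip; subst hiq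
        rw [if_pos ⟨rfl, rfl⟩]
        exact E1 i
      · subst hip
        rw [if_neg (by tauto)]
        exact (hdual q i i 0 (E2 q i (fun e => hiq e.symm))).swap
    · by_cases hiq : i = q
      · subst hiq
        rw [if_neg (by tauto)]
        exact hdual p i i 0 (E2 p i (fun e => hip e.symm))
      · rw [if_neg (by tauto)]
        by_cases hpq : p = q
        · subst hpq
          exact E2 i p hip
        · rcases (Ne.lt_or_gt hip) with h4 | h4
          · rcases (Ne.lt_or_gt (fun e => hiq e : i ≠ q)) with h5 | h5
            · rcases (Ne.lt_or_gt (fun e => hpq e : p ≠ q)) with h6 | h6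
              · exact E3 i p q h4 h6
              · exact (E3 i q p h5 h6).swap
            · exact hdual p q i 0 (hdual q i p 0 (E3 q i p h5 h4))
          · rcases (Ne.lt_or_gt (fun e => hiq e : i ≠ q)) with h5 | h5
            · exact (hdual q p i 0 (hdual p i q 0 (E3 p i q h4 h5))).swap
            · rcases (Ne.lt_or_gt (fun e => hpq e : p ≠ q)) with h6 | h6
              · exact hdual p q i 0 (E3 p q i h6 h5)
              · exact (hdual q p i 0 (E3 q p i h6 h4)).swap
end

section
/- Let φ : g → ℝ be C^∞ and define Φ : 𝐠 → ℝ by Φ(𝐮) = φ(u_n⬝⋯⬝u_1). Then for every 𝐮 ∈ 𝐠 and every 1 ≤ j ≤ n, writing T = u_n⬝⋯⬝u_1: the partial gradient is ∇_jΦ(𝐮) = u_{j−1}⬝⋯⬝u_1⬝∇φ(T)⬝u_n⬝⋯⬝u_{j+1}; consequently d_jΦ(𝐮) = u_j⬝⋯⬝u_1⬝∇φ(T)⬝u_n⬝⋯⬝u_{j+1} and d'_jΦ(𝐮) = u_{j−1}⬝⋯⬝u_1⬝∇φ(T)⬝u_n⬝⋯⬝u_j; in particular d_nΦ(𝐮)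 = dφ(T), d'_1Φ(𝐮) = d'φ(T), and d_jΦ(𝐮) = d'_{j+1}Φ(𝐮) for 1 ≤ j ≤ n−1. -/
open Matrix

attribute [local instance] Matrix.normedAddCommGroup Matrix.normedSpace

/-- The `j`-th partial gradient `∇_jΦ(𝐮)` of a function `Φ : 𝐠 → ℝ` on
`𝐠 = Fin n → g`: it satisfies `⟨∇_jΦ(𝐮),X⟩ = DΦ(𝐮)(X placed in the j-th slot)`. -/
noncomputable def bigGrad {N n : ℕ} (Φ : (Fin n → Matrix (Fin N) (Fin N) ℝ) → ℝ)
    (u : Fin n → Matrix (Fin N) (Fin N) ℝ) (j : Fin n) : Matrix (Fin N) (Fin N) ℝ :=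
  Matrix.of fun a b => fderiv ℝ Φ u (Pi.single j (Matrix.single b a 1))

/-- `d_jΦ(𝐮) = u_j ⬝ ∇_jΦ(𝐮)` -/
noncomputable def ddj {N n : ℕ} (Φ : (Fin n → Matrix (Fin N) (Fin N) ℝ) → ℝ)
    (u : Fin n → Matrix (Fin N) (Fin N) ℝ) (j : Fin n) : Matrix (Fin N) (Fin N) ℝ :=
  u j * bigGrad Φ u j

/-- `d'_jΦ(𝐮) = ∇_jΦ(𝐮) ⬝ u_j` -/
noncomputable def ddj' {N n : ℕ} (Φ : (Fin n → Matrix (Fin N) (Fin N) ℝ) → ℝ)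
    (u : Fin n → Matrix (Fin N) (Fin N) ℝ) (j : Fin n) : Matrix (Fin N) (Fin N) ℝ :=
  bigGrad Φ u j * u j

/-- The monodromy `𝓜(𝐮) = u_n ⬝ ⋯ ⬝ u_1` (in 1-based notation `u i = u_{i+1}`). -/
noncomputable def monod {N n : ℕ} (u : Fin n → Matrix (Fin N) (Fin N) ℝ) :
    Matrix (Fin N) (Fin N) ℝ :=
  (List.ofFn u).reverse.prod

/-- The decreasing partial product `u_j ⬝ ⋯ ⬝ u_1` (`j` 1-based, `0 ≤ j ≤ n`). -/
noncomputable def downProd {N n : ℕ} (u : Fin n → Matrix (Fin N) (Fin N) ℝ) (j : ℕ) :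
    Matrix (Fin N) (Fin N) ℝ :=
  ((List.ofFn u).take j).reverse.prod

/-- The decreasing partial product `u_n ⬝ ⋯ ⬝ u_{j+1}` (`j` 1-based, `0 ≤ j ≤ n`). -/
noncomputable def upProd {N n : ℕ} (u : Fin n → Matrix (Fin N) (Fin N) ℝ) (j : ℕ) :
    Matrix (Fin N) (Fin N) ℝ :=
  ((List.ofFn u).drop j).reverse.prod

/-- `T_j = u_j ⬝ ⋯ ⬝ u_1 ⬝ u_n ⬝ ⋯ ⬝ u_{j+1}` (`j` 1-based; `T_0 = T_n = 𝓜(𝐮)`). -/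
noncomputable def tmat {N n : ℕ} (u : Fin n → Matrix (Fin N) (Fin N) ℝ) (j : ℕ) :
    Matrix (Fin N) (Fin N) ℝ :=
  downProd u j * upProd u j

section Aux
variable {N n : ℕ}

lemma myMulBound (A B : Matrix (Fin N) (Fin N) ℝ) :
    ‖(LinearMap.mul ℝ (Matrix (Fin N) (Fin N) ℝ)) A B‖ ≤ (N : ℝ) * ‖A‖ * ‖B‖ := by
  rw [Matrix.norm_le_iff (by positivity)]
  intro i j
  calc ‖(A * B) i j‖ = ‖∑ k, A i k * B k j‖ := by rw [Matrix.mul_apply]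
    _ ≤ ∑ k, ‖A i k * B k j‖ := norm_sum_le _ _
    _ ≤ ∑ _k : Fin N, ‖A‖ * ‖B‖ := Finset.sum_le_sum fun k _ => by
        rw [norm_mul]
        exact mul_le_mul (Matrix.norm_entry_le_entrywise_sup_norm A)
          (Matrix.norm_entry_le_entrywise_sup_norm B) (norm_nonneg _) (norm_nonneg _)
    _ = (N : ℝ) * ‖A‖ * ‖B‖ := by
        simp [Finset.sum_const, Finset.card_univ, mul_assoc]

noncomputable def myMulCLM {N : ℕ} :
    Matrix (Fin N) (Fin N) ℝ →L[ℝ] Matrix (Fin N) (Fin N) ℝ →L[ℝ] Matrix (Fin N) (Fin N) ℝ :=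
  LinearMap.mkContinuous₂ (LinearMap.mul ℝ _) (N : ℝ) myMulBound

lemma contDiff_matMul :
    ContDiff ℝ (⊤ : ℕ∞) (fun p : Matrix (Fin N) (Fin N) ℝ × Matrix (Fin N) (Fin N) ℝ => p.1 * p.2) :=
  (myMulCLM (N := N)).isBoundedBilinearMap.contDiff

lemma ContDiff.matMul {E : Type*} [NormedAddCommGroup E] [NormedSpace ℝ E]
    {f h : E → Matrix (Fin N) (Fin N) ℝ} (hf : ContDiff ℝ (⊤ : ℕ∞) f) (hh : ContDiff ℝ (⊤ : ℕ∞) h) :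
    ContDiff ℝ (⊤ : ℕ∞) (fun x => f x * h x) :=
  (contDiff_matMul.comp (ContDiff.prodMk hf hh) :)

lemma listProd_contDiff : ∀ l : List (Fin n),
    ContDiff ℝ (⊤ : ℕ∞) (fun u : Fin n → Matrix (Fin N) (Fin N) ℝ => (l.map u).prod)
  | [] => by simpa using contDiff_const
  | i :: l => by
      simp only [List.map_cons, List.prod_cons]
      exact ((ContinuousLinearMap.proj (R := ℝ)
        (φ := fun _ : Fin n => Matrix (Fin N) (Fin N) ℝ) i).contDiff).matMul
        (listProd_contDiff l)

end Aux

section ListLemmas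
variable {N n : ℕ} (u : Fin n → Matrix (Fin N) (Fin N) ℝ)

lemma monod_contDiff : ContDiff ℝ (⊤ : ℕ∞) (monod (N := N) (n := n)) := by
  have h : (monod (N := N) (n := n))
      = fun u => (((List.finRange n).reverse).map u).prod := by
    funext u
    simp [monod, List.ofFn_eq_map, List.map_reverse]
  rw [h]
  exact listProd_contDiff _

lemma monod_eq_up_down (k : ℕ) : monod u = upProd u k * downProd u k := by
  unfold monod upProd downProd
  conv_lhs => rw [← List.take_append_drop k (List.ofFn u)]
  rw [List.reverse_append, List.prod_append]

lemma downProd_succ (j : Fin n) : downProd u (j.val + 1) = u j * downProd u j.val := by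
  unfold downProd
  rw [List.take_succ]
  have h : (List.ofFn u)[j.val]? = some (u j) := by simp
  rw [h]
  simp [List.prod_append]

lemma upProd_pred (j : Fin n) : upProd u j.val = upProd u (j.val + 1) * u j := by
  unfold upProd
  rw [List.drop_eq_getElem_cons (by simpa using j.isLt)]
  simp

lemma monod_factor (j : Fin n) :
    monod u = upProd u (j.val + 1) * u j * downProd u j.val := by
  rw [monod_eq_up_down u (j.val + 1), downProd_succ, ← mul_assoc]

lemma downProd_zero : downProd u 0 = 1 := by simp [downProd]

lemma upProd_zero : upProd u 0 = monod u := rfl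

lemma downProd_n : downProd u n = monod u := by
  unfold downProd monod
  rw [List.take_of_length_le (by simp)]

lemma upProd_n : upProd u n = 1 := by
  unfold upProd
  rw [List.drop_of_length_le (by simp)]
  simp

lemma downProd_update (j : Fin n) (v : Matrix (Fin N) (Fin N) ℝ) :
    downProd (Function.update u j v) j.val = downProd u j.val := by
  unfold downProd
  congr 2
  apply List.ext_getElem (by simp)
  intro i h1 h2
  have hi : i < j.val := by simpa using h1
  simp only [List.getElem_take, List.getElem_ofFn]
  rw [Function.update_of_ne (by exact Fin.ne_of_val_ne (by simpa using hi.ne))]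

lemma upProd_update (j : Fin n) (v : Matrix (Fin N) (Fin N) ℝ) :
    upProd (Function.update u j v) (j.val + 1) = upProd u (j.val + 1) := by
  unfold upProd
  congr 2
  apply List.ext_getElem (by simp)
  intro i h1 h2
  simp only [List.getElem_drop, List.getElem_ofFn]
  rw [Function.update_of_ne (by exact Fin.ne_of_val_ne (by simp; omega))]

end ListLemmas

section Key
variable {N n : ℕ} (φ : Matrix (Fin N) (Fin N) ℝ → ℝ)

lemma fderiv_apply_grad (T M : Matrix (Fin N) (Fin N) ℝ) :
    fderiv ℝ φ T M = ∑ i, ∑ k, M i k * grad φ T k i := by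
  conv_lhs => rw [matrix_eq_sum_single M]
  rw [map_sum]
  refine Finset.sum_congr rfl fun i _ => ?_
  rw [map_sum]
  refine Finset.sum_congr rfl fun k _ => ?_
  have hsb : Matrix.single i k (M i k) = (M i k) • Matrix.single i k (1 : ℝ) := by
    ext a b
    simp [Matrix.single]
  rw [hsb, (fderiv ℝ φ T).map_smul]
  simp [grad, smul_eq_mul]

lemma key_deriv_s8 (hφ : ContDiff ℝ (⊤ : ℕ∞) φ) (u : Fin n → Matrix (Fin N) (Fin N) ℝ)
    (j : Fin n) (X : Matrix (Fin N) (Fin N) ℝ) :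
    fderiv ℝ (fun w => φ (monod w)) u (Pi.single j X)
      = fderiv ℝ φ (monod u) (upProd u (j.val + 1) * X * downProd u j.val) := by
  set U := upProd u (j.val + 1) with hU
  set D := downProd u j.val with hD
  set T := monod u with hT
  set Φ : (Fin n → Matrix (Fin N) (Fin N) ℝ) → ℝ := fun w => φ (monod w) with hΦdef
  have hΦ : DifferentiableAt ℝ Φ u :=
    ((hφ.comp monod_contDiff).differentiable (by simp)) u
  let A : Matrix (Fin N) (Fin N) ℝ →L[ℝ] Matrix (Fin N) (Fin N) ℝ :=
    LinearMap.toContinuousLinearMap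
      ((LinearMap.mulRight ℝ D).comp (LinearMap.mulLeft ℝ U))
  have hAapp : ∀ v, A v = U * v * D := fun v => rfl
  let L : Matrix (Fin N) (Fin N) ℝ →L[ℝ] (Fin n → Matrix (Fin N) (Fin N) ℝ) :=
    LinearMap.toContinuousLinearMap
      (LinearMap.single ℝ (fun _ : Fin n => Matrix (Fin N) (Fin N) ℝ) j)
  have hLapp : ∀ v, L v = Pi.single j v := fun v => rfl
  -- derivative of v ↦ update u j v
  have hι : HasFDerivAt (fun v : Matrix (Fin N) (Fin N) ℝ => Function.update u j v) L (u j) := by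
    have heq : (fun v : Matrix (Fin N) (Fin N) ℝ => Function.update u j v)
        = fun v => Function.update u j 0 + L v := by
      funext v
      funext i
      rw [hLapp]
      by_cases h : i = j
      · subst h; simp
      · simp [Function.update_of_ne h, Pi.single_eq_of_ne h]
    rw [heq]
    exact (L.hasFDerivAt).const_add _
  have hcomp1 : HasFDerivAt (fun v => Φ (Function.update u j v))
      ((fderiv ℝ Φ u).comp L) (u j) := by
    have h0 : HasFDerivAt Φ (fderiv ℝ Φ u) (Function.update u j (u j)) := by
      rw [Function.update_eq_self]
      exact hΦ.hasFDerivAt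
    exact HasFDerivAt.comp (u j) h0 hι
  have hfun : (fun v => Φ (Function.update u j v)) = fun v => φ (U * v * D) := by
    funext v
    show φ (monod (Function.update u j v)) = _
    rw [monod_factor _ j, upProd_update, downProd_update, Function.update_self, hU, hD]
  have hTfac : U * u j * D = T := (monod_factor u j).symm
  have hcomp2 : HasFDerivAt (fun v => φ (U * v * D))
      ((fderiv ℝ φ T).comp A) (u j) := by
    have hdφ : DifferentiableAt ℝ φ (A (u j)) := by
      rw [hAapp, hTfac]; exact (hφ.differentiable (by simp)) T
    have h := hdφ.hasFDerivAt.comp (u j) A.hasFDerivAt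
    rw [hAapp, hTfac] at h
    exact h
  have huniq : (fderiv ℝ Φ u).comp L = (fderiv ℝ φ T).comp A :=
    (hfun ▸ hcomp1).unique hcomp2
  have : ((fderiv ℝ Φ u).comp L) X = ((fderiv ℝ φ T).comp A) X := by rw [huniq]
  simpa [hLapp, hAapp] using this

end Key

section Formulas
variable {N n : ℕ} (φ : Matrix (Fin N) (Fin N) ℝ → ℝ)

lemma bigGrad_formula (hφ : ContDiff ℝ (⊤ : ℕ∞) φ) (u : Fin n → Matrix (Fin N) (Fin N) ℝ) (j : Fin n) :
    bigGrad (fun w => φ (monod w)) u j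
      = downProd u j.val * grad φ (monod u) * upProd u (j.val + 1) := by
  ext a b
  show fderiv ℝ (fun w => φ (monod w)) u (Pi.single j (Matrix.single b a 1)) = _
  rw [key_deriv_s8 φ hφ, fderiv_apply_grad]
  have hentry : ∀ i k,
      (upProd u (j.val + 1) * Matrix.single b a (1 : ℝ) * downProd u j.val) i k
        = upProd u (j.val + 1) i b * downProd u j.val a k := by
    intro i k
    simp [Matrix.mul_apply, Matrix.single, Finset.sum_mul, ite_and, mul_ite, ite_mul]
  simp only [hentry]
  simp only [Matrix.mul_apply, Finset.sum_mul]
  refine Finset.sum_congr rfl fun i _ => Finset.sum_congr rfl fun k _ => ?_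
  ring

lemma ddj_formula (hφ : ContDiff ℝ (⊤ : ℕ∞) φ) (u : Fin n → Matrix (Fin N) (Fin N) ℝ) (j : Fin n) :
    ddj (fun w => φ (monod w)) u j
      = downProd u (j.val + 1) * grad φ (monod u) * upProd u (j.val + 1) := by
  rw [ddj, bigGrad_formula φ hφ, ← mul_assoc, ← mul_assoc, ← downProd_succ]

lemma ddj'_formula (hφ : ContDiff ℝ (⊤ : ℕ∞) φ) (u : Fin n → Matrix (Fin N) (Fin N) ℝ) (j : Fin n) :
    ddj' (fun w => φ (monod w)) u j
      = downProd u j.val * grad φ (monod u) * upProd u j.val := by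
  rw [ddj', bigGrad_formula φ hφ, mul_assoc, mul_assoc, ← upProd_pred, ← mul_assoc]

end Formulas


theorem statement8 (N n : ℕ) (hN : 1 ≤ N) (hn : 1 ≤ n)
    (φ : Matrix (Fin N) (Fin N) ℝ → ℝ) (hφ : ContDiff ℝ (⊤ : ℕ∞) φ) :
    ∀ (u : Fin n → Matrix (Fin N) (Fin N) ℝ) (j : Fin n),
      -- ∇_jΦ(𝐮) = u_{j−1}⋯u_1 ⬝ ∇φ(T) ⬝ u_n⋯u_{j+1}   (j 1-based = j.val + 1)
      bigGrad (fun w => φ (monod w)) u j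
          = downProd u j.val * grad φ (monod u) * upProd u (j.val + 1)
      -- d_jΦ(𝐮) = u_j⋯u_1 ⬝ ∇φ(T) ⬝ u_n⋯u_{j+1}
      ∧ ddj (fun w => φ (monod w)) u j
          = downProd u (j.val + 1) * grad φ (monod u) * upProd u (j.val + 1)
      -- d'_jΦ(𝐮) = u_{j−1}⋯u_1 ⬝ ∇φ(T) ⬝ u_n⋯u_j
      ∧ ddj' (fun w => φ (monod w)) u j
          = downProd u j.val * grad φ (monod u) * upProd u j.val
      -- d_nΦ(𝐮) = dφ(T)
      ∧ ddj (fun w => φ (monod w)) u ⟨n - 1, by omega⟩ = dr φ (monod u)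
      -- d'_1Φ(𝐮) = d'φ(T)
      ∧ ddj' (fun w => φ (monod w)) u ⟨0, by omega⟩ = dl φ (monod u)
      -- d_jΦ(𝐮) = d'_{j+1}Φ(𝐮) for 1 ≤ j ≤ n−1
      ∧ (∀ h : j.val + 1 < n,
          ddj (fun w => φ (monod w)) u j
            = ddj' (fun w => φ (monod w)) u ⟨j.val + 1, h⟩) := by
  intro u j
  refine ⟨bigGrad_formula φ hφ u j, ddj_formula φ hφ u j, ddj'_formula φ hφ u j, ?_, ?_, ?_⟩
  · rw [ddj_formula φ hφ]
    have hval : (⟨n - 1, by omega⟩ : Fin n).val + 1 = n := by simp; omega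
    rw [hval, downProd_n, upProd_n, mul_one, dr]
  · rw [ddj'_formula φ hφ]
    show downProd u 0 * _ * upProd u 0 = _
    rw [downProd_zero, upProd_zero, one_mul, dl]
  · intro h
    rw [ddj_formula φ hφ, ddj'_formula φ hφ]
end

section
/- Suppose the blocks of 𝐀, 𝐁, 𝐂, 𝐃 satisfy (A_{ij})* = −A_{ji}, (D_{ij})* = −D_{ji}, (B_{ij})* = C_{ji}, together with: A_{i+1,j+1} = −B_{i+1,j} = C_{i,j+1} = −D_{i,j} for all i ≠ j (all block indices understood mod n), and A_{j+1,j+1} − D_{j,j} + B_{j+1,j} − C_{j,j+1} = 0 for all j. Then for each j ∈ {1,…,n} the map 𝐮 ↦ T_j = u_j⬝⋯⬝u_1⬝u_n⬝⋯⬝u_{j+1} (the composition of the monodromy map with the j-th power of the cyclic shift) is a Poisson map: for all C^∞ functions φ, ψ : g → ℝ and all 𝐮 ∈ 𝐠, the bracket PB(𝐀,𝐁,𝐂,𝐃) of φ(T_j) and ψ(T_j) as functions of 𝐮, evaluated at 𝐮, equals the bracket PB(A_{j+1,j+1}, B_{j+1,j}, C_{j,j+1}, D_{j,j}) of φ and ψ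 evaluated at T_j. -/
open Matrix

attribute [local instance] Matrix.normedAddCommGroup Matrix.normedSpace

/-- The quadratic bracket PB(𝐀,𝐁,𝐂,𝐃) on `𝐠 = Fin n → g`, for operators
encoded by blocks `A i j`, `B i j`, `C i j`, `D i j`. -/
noncomputable def bigPB {N n : ℕ}
    (A B C D : Fin n → Fin n → (Matrix (Fin N) (Fin N) ℝ →ₗ[ℝ] Matrix (Fin N) (Fin N) ℝ))
    (Φ Ψ : (Fin n → Matrix (Fin N) (Fin N) ℝ) → ℝ)
    (u : Fin n → Matrix (Fin N) (Fin N) ℝ) : ℝ :=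
  ∑ i, ∑ j,
    (tf (A i j (ddj' Φ u j)) (ddj' Ψ u i) - tf (D i j (ddj Φ u j)) (ddj Ψ u i)
      + tf (B i j (ddj Φ u j)) (ddj' Ψ u i) - tf (C i j (ddj' Φ u j)) (ddj Ψ u i))

/-- The cyclic successor on `Fin n` (index shift mod n). -/
def finSucc {n : ℕ} (hn : 1 ≤ n) (j : Fin n) : Fin n :=
  ⟨(j.val + 1) % n, Nat.mod_lt _ hn⟩

namespace S11
variable {N n : ℕ}

variable {N n : ℕ}

theorem isBBM_matMul :
    IsBoundedBilinearMap ℝ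
      (fun p : Matrix (Fin N) (Fin N) ℝ × Matrix (Fin N) (Fin N) ℝ => p.1 * p.2) where
  add_left := fun x y z => add_mul x y z
  smul_left := fun c x y => smul_mul_assoc c x y
  add_right := fun x y z => mul_add x y z
  smul_right := fun c x y => mul_smul_comm c x y
  bound := ⟨N + 1, by positivity, fun x y => by
    rw [Matrix.norm_le_iff (by positivity)]
    intro i j
    calc ‖(x*y) i j‖ = ‖∑ k, x i k * y k j‖ := by rw [Matrix.mul_apply]
    _ ≤ ∑ k, ‖x i k * y k j‖ := norm_sum_le _ _
    _ ≤ ∑ _k : Fin N, ‖x‖ * ‖y‖ := Finset.sum_le_sum fun k _ => by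
        rw [norm_mul]
        exact mul_le_mul (norm_entry_le_entrywise_sup_norm x)
          (norm_entry_le_entrywise_sup_norm y) (norm_nonneg _) (norm_nonneg _)
    _ = (N : ℝ) * (‖x‖ * ‖y‖) := by simp [Finset.sum_const, mul_assoc]
    _ ≤ (↑N + 1) * ‖x‖ * ‖y‖ := by nlinarith [norm_nonneg x, norm_nonneg y]⟩

theorem Differentiable.matmul {E : Type*} [NormedAddCommGroup E] [NormedSpace ℝ E]
    {f g : E → Matrix (Fin N) (Fin N) ℝ} (hf : Differentiable ℝ f) (hg : Differentiable ℝ g) :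
    Differentiable ℝ fun x => f x * g x :=
  by have := isBBM_matMul.differentiable.comp (hf.prodMk hg); exact this

noncomputable def lprod' (l : List (Fin n)) (u : Fin n → Matrix (Fin N) (Fin N) ℝ) :
    Matrix (Fin N) (Fin N) ℝ := (l.map u).prod

theorem differentiable_lprod' (l : List (Fin n)) :
    Differentiable ℝ (lprod' (N := N) l) := by
  induction l with
  | nil =>
    have h : lprod' (N := N) (n := n) ([] : List (Fin n)) = fun _ => 1 := rfl
    rw [h]; exact differentiable_const _
  | cons a l ih =>
    have h : lprod' (N := N) (a :: l) = fun u => u a * lprod' l u := rfl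
    rw [h]
    exact Differentiable.matmul ((ContinuousLinearMap.proj a :
      (Fin n → Matrix (Fin N) (Fin N) ℝ) →L[ℝ] Matrix (Fin N) (Fin N) ℝ).differentiable) ih


variable {N n : ℕ}

theorem tf_stdBasis (M : Matrix (Fin N) (Fin N) ℝ) (a b : Fin N) :
    tf M (Matrix.single b a 1) = M a b := by
  simp [tf, Matrix.trace, Matrix.diag, Matrix.mul_apply, Matrix.single,
    Finset.sum_ite_eq, Finset.sum_ite_eq', ite_and]

theorem tf_add_left (X Y Z : Matrix (Fin N) (Fin N) ℝ) : tf (X + Y) Z = tf X Z + tf Y Z := by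
  simp [tf, add_mul]

theorem tf_sub_left (X Y Z : Matrix (Fin N) (Fin N) ℝ) : tf (X - Y) Z = tf X Z - tf Y Z := by
  simp [tf, sub_mul]

theorem tf_zero_left (Z : Matrix (Fin N) (Fin N) ℝ) : tf 0 Z = 0 := by simp [tf]

theorem tf_grad (φ : Matrix (Fin N) (Fin N) ℝ → ℝ) (x E : Matrix (Fin N) (Fin N) ℝ) :
    fderiv ℝ φ x E = tf (grad φ x) E := by
  have hE : E = ∑ i, ∑ j, (E i j) • Matrix.single i j 1 := by
    conv_lhs => rw [matrix_eq_sum_single E]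
    refine Finset.sum_congr rfl fun i _ => Finset.sum_congr rfl fun j _ => ?_
    rw [Matrix.smul_single, smul_eq_mul, mul_one]
  conv_lhs => rw [hE]
  rw [map_sum]
  simp only [map_sum, _root_.map_smul, smul_eq_mul]
  simp only [tf, Matrix.trace, Matrix.diag, Matrix.mul_apply, grad, Matrix.of_apply]
  rw [Finset.sum_comm]
  exact Finset.sum_congr rfl fun a _ => Finset.sum_congr rfl fun b _ => mul_comm _ _


variable {N n : ℕ}

def theList (n m : ℕ) : List (Fin n) :=
  ((List.finRange n).take m).reverse ++ ((List.finRange n).drop m).reverse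

def eIdx (hn : 1 ≤ n) (m t : ℕ) : Fin n := ⟨(m + n - 1 - t) % n, Nat.mod_lt _ hn⟩

theorem length_theList (m : ℕ) (hm : m ≤ n) : (theList n m).length = n := by
  simp [theList]; omega

theorem nodup_theList (m : ℕ) : (theList n m).Nodup := by
  have h1 : (theList n m).Perm (((List.finRange n).take m) ++ ((List.finRange n).drop m)) :=
    (List.reverse_perm _).append (List.reverse_perm _)
  rw [List.take_append_drop] at h1
  exact h1.symm.nodup (List.nodup_finRange n)

theorem theList_getElem (hn : 1 ≤ n) {m : ℕ} (hm1 : 1 ≤ m) (hm : m ≤ n) (t : ℕ)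
    (h : t < (theList n m).length) : (theList n m)[t] = eIdx hn m t := by
  have ht : t < n := by rwa [length_theList m hm] at h
  apply Fin.ext
  revert h
  unfold theList
  intro h
  rcases lt_or_ge t m with htm | htm
  · rw [List.getElem_append_left (by simp only [List.length_reverse, List.length_take, List.length_finRange]; omega)]
    simp only [List.getElem_reverse, List.getElem_take, List.getElem_finRange,
      List.length_reverse, List.length_take, List.length_finRange]
    show (min m n - 1 - t) = (eIdx hn m t).val
    simp only [eIdx]
    have h1 : min m n = m := by omega
    have h2 : m + n - 1 - t = (m - 1 - t) + n := by omega
    rw [h1, h2, Nat.add_mod_right, Nat.mod_eq_of_lt (by omega)]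
  · rw [List.getElem_append_right (by simp; omega)]
    simp only [List.getElem_reverse, List.getElem_drop, List.getElem_finRange,
      List.length_reverse, List.length_take, List.length_drop, List.length_finRange]
    show m + ((n - m) - 1 - (t - min m n)) = (eIdx hn m t).val
    simp only [eIdx]
    have h1 : min m n = m := by omega
    rw [h1, Nat.mod_eq_of_lt (by omega)]
    omega

theorem not_mem_take {l : List (Fin n)} (hnd : l.Nodup) {t : ℕ} (ht : t < l.length) :
    l[t] ∉ l.take t := by
  intro hmem
  obtain ⟨s, hs, hseq⟩ := List.mem_iff_getElem.mp hmem
  have hs' : s < t := by simp [List.length_take] at hs; omega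
  rw [List.getElem_take] at hseq
  have := (hnd.getElem_inj_iff).mp hseq
  omega

theorem not_mem_drop {l : List (Fin n)} (hnd : l.Nodup) {t : ℕ} (ht : t < l.length) :
    l[t] ∉ l.drop (t + 1) := by
  intro hmem
  obtain ⟨s, hs, hseq⟩ := List.mem_iff_getElem.mp hmem
  rw [List.getElem_drop] at hseq
  have := (hnd.getElem_inj_iff).mp hseq
  omega

theorem lprod'_update (l : List (Fin n)) (hnd : l.Nodup)
    (u : Fin n → Matrix (Fin N) (Fin N) ℝ) {t : ℕ} (ht : t < l.length) (v) :
    lprod' l (Function.update u (l[t]) v)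
      = ((l.map u).take t).prod * v * ((l.map u).drop (t+1)).prod := by
  set w := Function.update u l[t] v with hw
  have hsplit : l.map w = (l.take t).map w ++ w l[t] :: (l.drop (t+1)).map w := by
    conv_lhs => rw [← List.take_append_drop t l, List.drop_eq_getElem_cons ht]
    rw [List.map_append, List.map_cons]
  have h1 : (l.take t).map w = (l.take t).map u :=
    List.map_congr_left fun x hx =>
      Function.update_of_ne (fun hxeq => not_mem_take hnd ht (by rw [← hxeq]; exact hx)) _ _
  have h2 : (l.drop (t+1)).map w = (l.drop (t+1)).map u :=
    List.map_congr_left fun x hx =>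
      Function.update_of_ne (fun hxeq => not_mem_drop hnd ht (by rw [← hxeq]; exact hx)) _ _
  have h3 : w l[t] = v := Function.update_self _ _ _
  rw [lprod', hsplit, h1, h2, h3, List.prod_append, List.prod_cons, ← mul_assoc,
    List.map_take, List.map_drop]

theorem prod_split {M : Type*} [Monoid M] (L : List M) {t : ℕ} (ht : t < L.length) :
    L.prod = (L.take t).prod * L[t] * (L.drop (t+1)).prod := by
  conv_lhs => rw [← List.take_append_drop t L, List.drop_eq_getElem_cons ht]
  rw [List.prod_append, List.prod_cons, ← mul_assoc]

theorem prod_drop_step {M : Type*} [Monoid M] (L : List M) {t : ℕ} (ht : t < L.length) :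
    (L.drop t).prod = L[t] * (L.drop (t+1)).prod := by
  conv_lhs => rw [List.drop_eq_getElem_cons ht]
  rw [List.prod_cons]


variable {N n : ℕ}

noncomputable def singleCLM (k : Fin n) :
    Matrix (Fin N) (Fin N) ℝ →L[ℝ] (Fin n → Matrix (Fin N) (Fin N) ℝ) :=
  LinearMap.toContinuousLinearMap
    (LinearMap.single ℝ (fun _ : Fin n => Matrix (Fin N) (Fin N) ℝ) k)

theorem singleCLM_apply (k : Fin n) (E : Matrix (Fin N) (Fin N) ℝ) :
    singleCLM k E = Pi.single k E := rfl

noncomputable def mulLR (P Q : Matrix (Fin N) (Fin N) ℝ) :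
    Matrix (Fin N) (Fin N) ℝ →L[ℝ] Matrix (Fin N) (Fin N) ℝ :=
  LinearMap.toContinuousLinearMap ((LinearMap.mulLeft ℝ P).comp (LinearMap.mulRight ℝ Q))

theorem mulLR_apply (P Q E : Matrix (Fin N) (Fin N) ℝ) : mulLR P Q E = P * E * Q := by
  show P * (E * Q) = P * E * Q
  rw [mul_assoc]

theorem hasFDerivAt_update (u : Fin n → Matrix (Fin N) (Fin N) ℝ) (k : Fin n) :
    HasFDerivAt (fun v => Function.update u k v) (singleCLM (N := N) k) (u k) := by
  have h : (fun v : Matrix (Fin N) (Fin N) ℝ => Function.update u k v)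
      = fun v => (u - Pi.single k (u k)) + singleCLM k v := by
    funext v i
    by_cases hik : i = k
    · subst hik; simp [singleCLM_apply]
    · simp [Function.update_of_ne hik, singleCLM_apply, Pi.single_eq_of_ne hik]
  rw [h]
  exact (singleCLM (N := N) k).hasFDerivAt.const_add _

theorem fderiv_comp_single (φ : Matrix (Fin N) (Fin N) ℝ → ℝ) (hφ : Differentiable ℝ φ)
    (l : List (Fin n)) (u : Fin n → Matrix (Fin N) (Fin N) ℝ) (k : Fin n)
    (P Q : Matrix (Fin N) (Fin N) ℝ)
    (hPQ : ∀ v, lprod' l (Function.update u k v) = P * v * Q)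
    (E : Matrix (Fin N) (Fin N) ℝ) :
    fderiv ℝ (fun w => φ (lprod' l w)) u (Pi.single k E)
      = fderiv ℝ φ (P * u k * Q) (P * E * Q) := by
  have hΦ : Differentiable ℝ fun w => φ (lprod' l w) := hφ.comp (differentiable_lprod' l)
  have hux : Function.update u k (u k) = u := Function.update_eq_self k u
  have hg : HasFDerivAt (fun w => φ (lprod' l w))
      (fderiv ℝ (fun w => φ (lprod' l w)) u) (Function.update u k (u k)) := by
    rw [hux]; exact (hΦ u).hasFDerivAt
  have h1 : HasFDerivAt (fun v => φ (lprod' l (Function.update u k v)))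
      ((fderiv ℝ (fun w => φ (lprod' l w)) u).comp (singleCLM k)) (u k) :=
    hg.comp (u k) (hasFDerivAt_update u k)
  have heq : (fun v => φ (lprod' l (Function.update u k v)))
      = fun v => φ (mulLR P Q v) := by
    funext v; rw [hPQ v, mulLR_apply]
  have hg2 : HasFDerivAt φ (fderiv ℝ φ (P * u k * Q)) (mulLR P Q (u k)) := by
    rw [mulLR_apply]; exact (hφ _).hasFDerivAt
  have h2 : HasFDerivAt (fun v => φ (lprod' l (Function.update u k v)))
      ((fderiv ℝ φ (P * u k * Q)).comp (mulLR P Q)) (u k) := by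
    rw [heq]; exact hg2.comp (u k) (mulLR P Q).hasFDerivAt
  have h3 := h1.unique h2
  have h4 := congrArg (fun (L : Matrix (Fin N) (Fin N) ℝ →L[ℝ] ℝ) => L E) h3
  simpa [singleCLM_apply, mulLR_apply] using h4




theorem bigGrad_comp (φ : Matrix (Fin N) (Fin N) ℝ → ℝ) (hφ : Differentiable ℝ φ)
    (l : List (Fin n)) (u : Fin n → Matrix (Fin N) (Fin N) ℝ) (k : Fin n)
    (P Q : Matrix (Fin N) (Fin N) ℝ)
    (hPQ : ∀ v, lprod' l (Function.update u k v) = P * v * Q) :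
    bigGrad (fun w => φ (lprod' l w)) u k = Q * grad φ (P * u k * Q) * P := by
  have h4 : ∀ (G S : Matrix (Fin N) (Fin N) ℝ), tf G (P * S * Q) = tf (Q * G * P) S := by
    intro G S
    simp only [tf]
    rw [show G * (P * S * Q) = (G * P * S) * Q by simp [mul_assoc], Matrix.trace_mul_comm,
      show Q * (G * P * S) = (Q * G * P) * S by simp [mul_assoc]]
  ext a b
  simp only [bigGrad, Matrix.of_apply]
  rw [fderiv_comp_single φ hφ l u k P Q hPQ, tf_grad, h4, tf_stdBasis]

theorem hPQ_of (hn : 1 ≤ n) {m : ℕ} (hm1 : 1 ≤ m) (hm : m ≤ n)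
    (u : Fin n → Matrix (Fin N) (Fin N) ℝ) {t : ℕ} (ht : t < n) :
    ∀ v, lprod' (theList n m) (Function.update u (eIdx hn m t) v)
      = (((theList n m).map u).take t).prod * v * (((theList n m).map u).drop (t+1)).prod := by
  intro v
  have ht' : t < (theList n m).length := by rw [length_theList m hm]; exact ht
  rw [← theList_getElem hn hm1 hm t ht', lprod'_update _ (nodup_theList m) u ht']

theorem Tu_split (hn : 1 ≤ n) {m : ℕ} (hm1 : 1 ≤ m) (hm : m ≤ n)
    (u : Fin n → Matrix (Fin N) (Fin N) ℝ) {t : ℕ} (ht : t < n) :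
    (((theList n m).map u).take t).prod * u (eIdx hn m t) * (((theList n m).map u).drop (t+1)).prod
      = lprod' (theList n m) u := by
  have ht' : t < ((theList n m).map u).length := by
    rw [List.length_map, length_theList m hm]; exact ht
  have hL : ((theList n m).map u)[t] = u (eIdx hn m t) := by
    rw [List.getElem_map, theList_getElem hn hm1 hm t (by rw [length_theList m hm]; exact ht)]
  rw [lprod', prod_split _ ht', hL]

theorem ddj_eq (hn : 1 ≤ n) {m : ℕ} (hm1 : 1 ≤ m) (hm : m ≤ n)
    (φ : Matrix (Fin N) (Fin N) ℝ → ℝ) (hφ : Differentiable ℝ φ)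
    (u : Fin n → Matrix (Fin N) (Fin N) ℝ) {t : ℕ} (ht : t < n) :
    ddj (fun w => φ (lprod' (theList n m) w)) u (eIdx hn m t)
      = (((theList n m).map u).drop t).prod * grad φ (lprod' (theList n m) u)
          * (((theList n m).map u).take t).prod := by
  have hbg := bigGrad_comp φ hφ (theList n m) u (eIdx hn m t) _ _ (hPQ_of hn hm1 hm u ht)
  rw [Tu_split hn hm1 hm u ht] at hbg
  have ht' : t < ((theList n m).map u).length := by
    rw [List.length_map, length_theList m hm]; exact ht
  have hL : ((theList n m).map u)[t] = u (eIdx hn m t) := by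
    rw [List.getElem_map, theList_getElem hn hm1 hm t (by rw [length_theList m hm]; exact ht)]
  rw [ddj, hbg, prod_drop_step _ ht', hL]
  simp [mul_assoc]

theorem ddj'_eq (hn : 1 ≤ n) {m : ℕ} (hm1 : 1 ≤ m) (hm : m ≤ n)
    (φ : Matrix (Fin N) (Fin N) ℝ → ℝ) (hφ : Differentiable ℝ φ)
    (u : Fin n → Matrix (Fin N) (Fin N) ℝ) {t : ℕ} (ht : t < n) :
    ddj' (fun w => φ (lprod' (theList n m) w)) u (eIdx hn m t)
      = (((theList n m).map u).drop (t+1)).prod * grad φ (lprod' (theList n m) u)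
          * (((theList n m).map u).take (t+1)).prod := by
  have hbg := bigGrad_comp φ hφ (theList n m) u (eIdx hn m t) _ _ (hPQ_of hn hm1 hm u ht)
  rw [Tu_split hn hm1 hm u ht] at hbg
  have ht' : t < ((theList n m).map u).length := by
    rw [List.length_map, length_theList m hm]; exact ht
  have hL : ((theList n m).map u)[t] = u (eIdx hn m t) := by
    rw [List.getElem_map, theList_getElem hn hm1 hm t (by rw [length_theList m hm]; exact ht)]
  rw [ddj', hbg, List.prod_take_succ _ t ht', hL]
  simp [mul_assoc]


theorem tmat_eq_lprod' (u : Fin n → Matrix (Fin N) (Fin N) ℝ) (m : ℕ) :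
    tmat u m = lprod' (theList n m) u := by
  simp [tmat, downProd, upProd, lprod', theList, List.ofFn_eq_map, List.map_append,
    List.map_reverse, List.map_take, List.map_drop, List.prod_append]

theorem eIdx_zero (hn : 1 ≤ n) (j : Fin n) : eIdx hn (j.val + 1) 0 = j := by
  apply Fin.ext
  show (j.val + 1 + n - 1 - 0) % n = j.val
  rw [show j.val + 1 + n - 1 - 0 = j.val + n by omega, Nat.add_mod_right,
    Nat.mod_eq_of_lt j.isLt]

theorem eIdx_n (hn : 1 ≤ n) (j : Fin n) : eIdx hn (j.val + 1) n = j := by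
  apply Fin.ext
  show (j.val + 1 + n - 1 - n) % n = j.val
  rw [show j.val + 1 + n - 1 - n = j.val by omega, Nat.mod_eq_of_lt j.isLt]

theorem eIdx_last (hn : 1 ≤ n) (j : Fin n) : eIdx hn (j.val + 1) (n - 1) = finSucc hn j := by
  apply Fin.ext
  show (j.val + 1 + n - 1 - (n - 1)) % n = (j.val + 1) % n
  congr 1
  omega

theorem eIdx_pred (hn : 1 ≤ n) {m : ℕ} (hm1 : 1 ≤ m) {t : ℕ} (ht1 : 1 ≤ t) (ht : t ≤ n) :
    finSucc hn (eIdx hn m t) = eIdx hn m (t - 1) := by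
  apply Fin.ext
  show ((m + n - 1 - t) % n + 1) % n = (m + n - 1 - (t - 1)) % n
  rw [Nat.mod_add_mod]
  congr 1
  omega

theorem eIdx_inj (hn : 1 ≤ n) {m : ℕ} (hm1 : 1 ≤ m) {p q : ℕ}
    (hp : p < n) (hq : q < n) (h : eIdx hn m p = eIdx hn m q) : p = q := by
  have hv : (m + n - 1 - p) % n = (m + n - 1 - q) % n := congrArg Fin.val h
  have key : ∀ p q : ℕ, p ≤ q → q < n →
      (m + n - 1 - p) % n = (m + n - 1 - q) % n → p = q := by
    intro p q hpq hq hv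
    have h1 : m + n - 1 - p = (m + n - 1 - q) + (q - p) := by omega
    have h2 : (m + n - 1 - q) ≡ (m + n - 1 - q) + (q - p) [MOD n] := by
      unfold Nat.ModEq
      rw [← h1]
      exact hv.symm
    have h3 := (Nat.modEq_iff_dvd' (Nat.le_add_right _ _)).mp h2
    rw [Nat.add_sub_cancel_left] at h3
    have h4 : q - p = 0 := by
      by_contra hne
      have := Nat.le_of_dvd (by omega) h3
      omega
    omega
  rcases le_total p q with hle | hle
  · exact key p q hle hq hv
  · exact (key q p hle hp hv.symm).symm

theorem eIdx_n_eq_zero (hn : 1 ≤ n) {m : ℕ} (hm1 : 1 ≤ m) : eIdx hn m n = eIdx hn m 0 := by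
  apply Fin.ext
  show (m + n - 1 - n) % n = (m + n - 1 - 0) % n
  rw [show m + n - 1 - 0 = (m + n - 1 - n) + n by omega, Nat.add_mod_right]



theorem sum_if_const {c : Prop} [Decidable c] (s : Finset ℕ) (f : ℕ → ℝ) :
    ∑ q ∈ s, (if c then f q else 0) = if c then ∑ q ∈ s, f q else 0 := by
  split <;> simp

theorem shiftL (n : ℕ) (f : ℕ → ℝ) :
    ∑ p ∈ Finset.range (n+1), (if 1 ≤ p then f p else 0)
      = ∑ p ∈ Finset.range n, f (p+1) := by
  rw [Finset.sum_range_succ']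
  simp

theorem shiftR (n : ℕ) (f : ℕ → ℝ) :
    ∑ p ∈ Finset.range (n+1), (if p < n then f p else 0)
      = ∑ p ∈ Finset.range n, f p := by
  rw [Finset.sum_range_succ, if_neg (lt_irrefl n), add_zero]
  exact Finset.sum_congr rfl fun p hp => if_pos (Finset.mem_range.mp hp)

theorem sum_pair {n : ℕ} (a b : ℕ) (ha : a < n+1) (hb : b < n+1) (c : ℝ) :
    ∑ p ∈ Finset.range (n+1), ∑ q ∈ Finset.range (n+1),
      (if p = a ∧ q = b then c else 0) = c := by
  simp only [ite_and, sum_if_const]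
  rw [Finset.sum_ite_eq' (Finset.range (n+1)) a]
  rw [if_pos (Finset.mem_range.mpr ha)]
  rw [Finset.sum_ite_eq' (Finset.range (n+1)) b]
  rw [if_pos (Finset.mem_range.mpr hb)]

theorem grid_collapse (n : ℕ) (hn : 1 ≤ n) (fA fB fC fD : ℕ → ℕ → ℝ)
    (hmid : ∀ p q, 1 ≤ p → p < n → 1 ≤ q → q < n → fA p q - fD p q + fB p q - fC p q = 0)
    (hAB : ∀ q, 1 ≤ q → q < n → fA n q + fB n q = 0)
    (hAC : ∀ p, 1 ≤ p → p < n → fA p n - fC p n = 0)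
    (hDB : ∀ p, 1 ≤ p → p < n → fB p 0 - fD p 0 = 0)
    (hDC : ∀ q, 1 ≤ q → q < n → fD 0 q + fC 0 q = 0) :
    (∑ a ∈ Finset.range n, ∑ b ∈ Finset.range n,
        (fA (a+1) (b+1) - fD a b + fB (a+1) b - fC a (b+1)))
      = fA n n - fD 0 0 + fB n 0 - fC 0 n := by
  have e1 : ∑ p ∈ Finset.range (n+1), ∑ q ∈ Finset.range (n+1),
        (if 1 ≤ p ∧ 1 ≤ q then fA p q else 0)
      = ∑ a ∈ Finset.range n, ∑ b ∈ Finset.range n, fA (a+1) (b+1) := by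
    have h : ∀ p, ∑ q ∈ Finset.range (n+1), (if 1 ≤ p ∧ 1 ≤ q then fA p q else 0)
        = (if 1 ≤ p then ∑ b ∈ Finset.range n, fA p (b+1) else 0) := by
      intro p
      simp only [ite_and, sum_if_const]
      rw [shiftL n (fA p)]
    rw [Finset.sum_congr rfl fun p _ => h p, shiftL]
  have e2 : ∑ p ∈ Finset.range (n+1), ∑ q ∈ Finset.range (n+1),
        (if p < n ∧ q < n then fD p q else 0)
      = ∑ a ∈ Finset.range n, ∑ b ∈ Finset.range n, fD a b := by
    have h : ∀ p, ∑ q ∈ Finset.range (n+1), (if p < n ∧ q < n then fD p q else 0)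
        = (if p < n then ∑ b ∈ Finset.range n, fD p b else 0) := by
      intro p
      simp only [ite_and, sum_if_const]
      rw [shiftR n (fD p)]
    rw [Finset.sum_congr rfl fun p _ => h p, shiftR]
  have e3 : ∑ p ∈ Finset.range (n+1), ∑ q ∈ Finset.range (n+1),
        (if 1 ≤ p ∧ q < n then fB p q else 0)
      = ∑ a ∈ Finset.range n, ∑ b ∈ Finset.range n, fB (a+1) b := by
    have h : ∀ p, ∑ q ∈ Finset.range (n+1), (if 1 ≤ p ∧ q < n then fB p q else 0)
        = (if 1 ≤ p then ∑ b ∈ Finset.range n, fB p b else 0) := by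
      intro p
      simp only [ite_and, sum_if_const]
      rw [shiftR n (fB p)]
    rw [Finset.sum_congr rfl fun p _ => h p, shiftL]
  have e4 : ∑ p ∈ Finset.range (n+1), ∑ q ∈ Finset.range (n+1),
        (if p < n ∧ 1 ≤ q then fC p q else 0)
      = ∑ a ∈ Finset.range n, ∑ b ∈ Finset.range n, fC a (b+1) := by
    have h : ∀ p, ∑ q ∈ Finset.range (n+1), (if p < n ∧ 1 ≤ q then fC p q else 0)
        = (if p < n then ∑ b ∈ Finset.range n, fC p (b+1) else 0) := by
      intro p
      simp only [ite_and, sum_if_const]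
      rw [shiftL n (fC p)]
    rw [Finset.sum_congr rfl fun p _ => h p, shiftR]
  have hsplit : ∑ a ∈ Finset.range n, ∑ b ∈ Finset.range n,
        (fA (a+1) (b+1) - fD a b + fB (a+1) b - fC a (b+1))
      = ∑ p ∈ Finset.range (n+1), ∑ q ∈ Finset.range (n+1),
        ((if 1 ≤ p ∧ 1 ≤ q then fA p q else 0) - (if p < n ∧ q < n then fD p q else 0)
          + (if 1 ≤ p ∧ q < n then fB p q else 0) - (if p < n ∧ 1 ≤ q then fC p q else 0)) := by
    simp only [Finset.sum_sub_distrib, Finset.sum_add_distrib]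
    rw [e1, e2, e3, e4]
  rw [hsplit]
  have hpoint : ∀ p ∈ Finset.range (n+1), ∀ q ∈ Finset.range (n+1),
      ((if 1 ≤ p ∧ 1 ≤ q then fA p q else 0) - (if p < n ∧ q < n then fD p q else 0)
        + (if 1 ≤ p ∧ q < n then fB p q else 0) - (if p < n ∧ 1 ≤ q then fC p q else 0))
      = ((if p = n ∧ q = n then fA n n else 0) - (if p = 0 ∧ q = 0 then fD 0 0 else 0)
        + (if p = n ∧ q = 0 then fB n 0 else 0) - (if p = 0 ∧ q = n then fC 0 n else 0)) := by
    intro p hp q hq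
    rw [Finset.mem_range] at hp hq
    have hptri : p = 0 ∨ (1 ≤ p ∧ p < n) ∨ p = n := by omega
    have hqtri : q = 0 ∨ (1 ≤ q ∧ q < n) ∨ q = n := by omega
    rcases hptri with rfl | ⟨hp1, hp2⟩ | hpn
    · rcases hqtri with rfl | ⟨hq1, hq2⟩ | hqn
      · rw [if_neg (show ¬(1 ≤ 0 ∧ 1 ≤ 0) by omega),
            if_pos (show 0 < n ∧ 0 < n by omega),
            if_neg (show ¬(1 ≤ 0 ∧ 0 < n) by omega),
            if_neg (show ¬(0 < n ∧ 1 ≤ 0) by omega),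
            if_neg (show ¬((0:ℕ) = n ∧ (0:ℕ) = n) by omega),
            if_pos (show (0:ℕ) = 0 ∧ (0:ℕ) = 0 by omega),
            if_neg (show ¬((0:ℕ) = n ∧ (0:ℕ) = 0) by omega),
            if_neg (show ¬((0:ℕ) = 0 ∧ (0:ℕ) = n) by omega)]
      · rw [if_neg (show ¬(1 ≤ 0 ∧ 1 ≤ q) by omega),
            if_pos (show 0 < n ∧ q < n by omega),
            if_neg (show ¬(1 ≤ 0 ∧ q < n) by omega),
            if_pos (show 0 < n ∧ 1 ≤ q by omega),
            if_neg (show ¬((0:ℕ) = n ∧ q = n) by omega),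
            if_neg (show ¬((0:ℕ) = 0 ∧ q = 0) by omega),
            if_neg (show ¬((0:ℕ) = n ∧ q = 0) by omega),
            if_neg (show ¬((0:ℕ) = 0 ∧ q = n) by omega)]
        have := hDC q hq1 hq2
        linarith
      · rw [if_neg (show ¬(1 ≤ 0 ∧ 1 ≤ q) by omega),
            if_neg (show ¬(0 < n ∧ q < n) by omega),
            if_neg (show ¬(1 ≤ 0 ∧ q < n) by omega),
            if_pos (show 0 < n ∧ 1 ≤ q by omega),
            if_neg (show ¬((0:ℕ) = n ∧ q = n) by omega),
            if_neg (show ¬((0:ℕ) = 0 ∧ q = 0) by omega),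
            if_neg (show ¬((0:ℕ) = n ∧ q = 0) by omega),
            if_pos (show (0:ℕ) = 0 ∧ q = n by omega)]
        rw [hqn]
    · rcases hqtri with rfl | ⟨hq1, hq2⟩ | hqn
      · rw [if_neg (show ¬(1 ≤ p ∧ 1 ≤ 0) by omega),
            if_pos (show p < n ∧ 0 < n by omega),
            if_pos (show 1 ≤ p ∧ 0 < n by omega),
            if_neg (show ¬(p < n ∧ 1 ≤ 0) by omega),
            if_neg (show ¬(p = n ∧ (0:ℕ) = n) by omega),
            if_neg (show ¬(p = 0 ∧ (0:ℕ) = 0) by omega),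
            if_neg (show ¬(p = n ∧ (0:ℕ) = 0) by omega),
            if_neg (show ¬(p = 0 ∧ (0:ℕ) = n) by omega)]
        have := hDB p hp1 hp2
        linarith
      · rw [if_pos (show 1 ≤ p ∧ 1 ≤ q by omega),
            if_pos (show p < n ∧ q < n by omega),
            if_pos (show 1 ≤ p ∧ q < n by omega),
            if_pos (show p < n ∧ 1 ≤ q by omega),
            if_neg (show ¬(p = n ∧ q = n) by omega),
            if_neg (show ¬(p = 0 ∧ q = 0) by omega),
            if_neg (show ¬(p = n ∧ q = 0) by omega),
            if_neg (show ¬(p = 0 ∧ q = n) by omega)]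
        have := hmid p q hp1 hp2 hq1 hq2
        linarith
      · rw [if_pos (show 1 ≤ p ∧ 1 ≤ q by omega),
            if_neg (show ¬(p < n ∧ q < n) by omega),
            if_neg (show ¬(1 ≤ p ∧ q < n) by omega),
            if_pos (show p < n ∧ 1 ≤ q by omega),
            if_neg (show ¬(p = n ∧ q = n) by omega),
            if_neg (show ¬(p = 0 ∧ q = 0) by omega),
            if_neg (show ¬(p = n ∧ q = 0) by omega),
            if_neg (show ¬(p = 0 ∧ q = n) by omega)]
        rw [hqn]
        have := hAC p hp1 hp2
        linarith
    · rcases hqtri with rfl | ⟨hq1, hq2⟩ | hqn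
      · rw [if_neg (show ¬(1 ≤ p ∧ 1 ≤ 0) by omega),
            if_neg (show ¬(p < n ∧ 0 < n) by omega),
            if_pos (show 1 ≤ p ∧ 0 < n by omega),
            if_neg (show ¬(p < n ∧ 1 ≤ 0) by omega),
            if_neg (show ¬(p = n ∧ (0:ℕ) = n) by omega),
            if_neg (show ¬(p = 0 ∧ (0:ℕ) = 0) by omega),
            if_pos (show p = n ∧ (0:ℕ) = 0 by omega),
            if_neg (show ¬(p = 0 ∧ (0:ℕ) = n) by omega)]
        rw [hpn]
      · rw [if_pos (show 1 ≤ p ∧ 1 ≤ q by omega),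
            if_neg (show ¬(p < n ∧ q < n) by omega),
            if_pos (show 1 ≤ p ∧ q < n by omega),
            if_neg (show ¬(p < n ∧ 1 ≤ q) by omega),
            if_neg (show ¬(p = n ∧ q = n) by omega),
            if_neg (show ¬(p = 0 ∧ q = 0) by omega),
            if_neg (show ¬(p = n ∧ q = 0) by omega),
            if_neg (show ¬(p = 0 ∧ q = n) by omega)]
        rw [hpn]
        have := hAB q hq1 hq2
        linarith
      · rw [if_pos (show 1 ≤ p ∧ 1 ≤ q by omega),
            if_neg (show ¬(p < n ∧ q < n) by omega),
            if_neg (show ¬(1 ≤ p ∧ q < n) by omega),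
            if_neg (show ¬(p < n ∧ 1 ≤ q) by omega),
            if_pos (show p = n ∧ q = n by omega),
            if_neg (show ¬(p = 0 ∧ q = 0) by omega),
            if_neg (show ¬(p = n ∧ q = 0) by omega),
            if_neg (show ¬(p = 0 ∧ q = n) by omega)]
        rw [hpn, hqn]
  rw [Finset.sum_congr rfl fun p hp => Finset.sum_congr rfl fun q hq => hpoint p hp q hq]
  simp only [Finset.sum_sub_distrib, Finset.sum_add_distrib]
  rw [sum_pair n n (by omega) (by omega), sum_pair 0 0 (by omega) (by omega),
    sum_pair n 0 (by omega) (by omega), sum_pair 0 n (by omega) (by omega)]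


theorem tf_op2_add {O1 O2 : Matrix (Fin N) (Fin N) ℝ →ₗ[ℝ] Matrix (Fin N) (Fin N) ℝ}
    (h : O1 + O2 = 0) (X Y : Matrix (Fin N) (Fin N) ℝ) :
    tf (O1 X) Y + tf (O2 X) Y = 0 := by
  have h' : O1 X + O2 X = 0 := by
    have := congrArg (fun (O : Matrix (Fin N) (Fin N) ℝ →ₗ[ℝ] Matrix (Fin N) (Fin N) ℝ) => O X) h
    simpa using this
  rw [← tf_add_left, h', tf_zero_left]

theorem tf_op2_sub {O1 O2 : Matrix (Fin N) (Fin N) ℝ →ₗ[ℝ] Matrix (Fin N) (Fin N) ℝ}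
    (h : O1 - O2 = 0) (X Y : Matrix (Fin N) (Fin N) ℝ) :
    tf (O1 X) Y - tf (O2 X) Y = 0 := by
  have h' : O1 X - O2 X = 0 := by
    have := congrArg (fun (O : Matrix (Fin N) (Fin N) ℝ →ₗ[ℝ] Matrix (Fin N) (Fin N) ℝ) => O X) h
    simpa using this
  rw [← tf_sub_left, h', tf_zero_left]

theorem tf_op4 {O1 O2 O3 O4 : Matrix (Fin N) (Fin N) ℝ →ₗ[ℝ] Matrix (Fin N) (Fin N) ℝ}
    (h : O1 - O2 + O3 - O4 = 0) (X Y : Matrix (Fin N) (Fin N) ℝ) :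
    tf (O1 X) Y - tf (O2 X) Y + tf (O3 X) Y - tf (O4 X) Y = 0 := by
  have h' : O1 X - O2 X + O3 X - O4 X = 0 := by
    have := congrArg (fun (O : Matrix (Fin N) (Fin N) ℝ →ₗ[ℝ] Matrix (Fin N) (Fin N) ℝ) => O X) h
    simpa using this
  rw [← tf_sub_left (O1 X), ← tf_add_left, ← tf_sub_left, h', tf_zero_left]

section Ops
variable (hn : 1 ≤ n)
  (A B C D : Fin n → Fin n → (Matrix (Fin N) (Fin N) ℝ →ₗ[ℝ] Matrix (Fin N) (Fin N) ℝ))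
  (h1 : ∀ i j : Fin n, i ≠ j →
      A (finSucc hn i) (finSucc hn j) = - B (finSucc hn i) j
        ∧ A (finSucc hn i) (finSucc hn j) = C i (finSucc hn j)
        ∧ A (finSucc hn i) (finSucc hn j) = - D i j)
  (h2 : ∀ j : Fin n,
      A (finSucc hn j) (finSucc hn j) - D j j + B (finSucc hn j) j - C j (finSucc hn j) = 0)

include h1 h2 in
theorem op_mid {m p q : ℕ} (hm1 : 1 ≤ m) (hp1 : 1 ≤ p) (hp : p ≤ n) (hq1 : 1 ≤ q) (hq : q ≤ n) :
    A (eIdx hn m (p-1)) (eIdx hn m (q-1)) - D (eIdx hn m p) (eIdx hn m q)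
      + B (eIdx hn m (p-1)) (eIdx hn m q) - C (eIdx hn m p) (eIdx hn m (q-1)) = 0 := by
  rw [← eIdx_pred hn hm1 hp1 hp, ← eIdx_pred hn hm1 hq1 hq]
  by_cases hpq : eIdx hn m p = eIdx hn m q
  · rw [hpq]; exact h2 _
  · obtain ⟨e1, e2, e3⟩ := h1 _ _ hpq
    have hB : B (finSucc hn (eIdx hn m p)) (eIdx hn m q)
        = - A (finSucc hn (eIdx hn m p)) (finSucc hn (eIdx hn m q)) := by rw [e1, neg_neg]
    have hD : D (eIdx hn m p) (eIdx hn m q)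
        = - A (finSucc hn (eIdx hn m p)) (finSucc hn (eIdx hn m q)) := by rw [e3, neg_neg]
    rw [hB, hD, ← e2]
    abel

include h1 in
theorem op_top {m q : ℕ} (hm1 : 1 ≤ m) (hq1 : 1 ≤ q) (hq : q < n) :
    A (eIdx hn m (n-1)) (eIdx hn m (q-1)) + B (eIdx hn m (n-1)) (eIdx hn m q) = 0 := by
  have hne : eIdx hn m n ≠ eIdx hn m q := by
    rw [eIdx_n_eq_zero hn hm1]
    intro h
    have := eIdx_inj hn hm1 (by omega) hq h
    omega
  obtain ⟨e1, _, _⟩ := h1 _ _ hne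
  rw [eIdx_pred hn hm1 hn (le_refl n), eIdx_pred hn hm1 hq1 (le_of_lt hq)] at e1
  rw [e1]
  abel

include h1 in
theorem op_right {m p : ℕ} (hm1 : 1 ≤ m) (hp1 : 1 ≤ p) (hp : p < n) :
    A (eIdx hn m (p-1)) (eIdx hn m (n-1)) - C (eIdx hn m p) (eIdx hn m (n-1)) = 0 := by
  have hne : eIdx hn m p ≠ eIdx hn m n := by
    rw [eIdx_n_eq_zero hn hm1]
    intro h
    have := eIdx_inj hn hm1 hp (by omega) h
    omega
  obtain ⟨_, e2, _⟩ := h1 _ _ hne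
  rw [eIdx_pred hn hm1 hp1 (le_of_lt hp), eIdx_pred hn hm1 hn (le_refl n)] at e2
  rw [e2]
  abel

include h1 in
theorem op_left {m p : ℕ} (hm1 : 1 ≤ m) (hp1 : 1 ≤ p) (hp : p < n) :
    B (eIdx hn m (p-1)) (eIdx hn m 0) - D (eIdx hn m p) (eIdx hn m 0) = 0 := by
  have hne : eIdx hn m p ≠ eIdx hn m 0 := by
    intro h
    have := eIdx_inj hn hm1 hp (by omega) h
    omega
  obtain ⟨e1, _, e3⟩ := h1 _ _ hne
  have hBD : B (finSucc hn (eIdx hn m p)) (eIdx hn m 0) = D (eIdx hn m p) (eIdx hn m 0) :=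
    neg_inj.mp (e1.symm.trans e3)
  rw [eIdx_pred hn hm1 hp1 (le_of_lt hp)] at hBD
  rw [hBD]
  abel

include h1 in
theorem op_bottom {m q : ℕ} (hm1 : 1 ≤ m) (hq1 : 1 ≤ q) (hq : q < n) :
    D (eIdx hn m 0) (eIdx hn m q) + C (eIdx hn m 0) (eIdx hn m (q-1)) = 0 := by
  have hne : eIdx hn m 0 ≠ eIdx hn m q := by
    intro h
    have := eIdx_inj hn hm1 (by omega) hq h
    omega
  obtain ⟨_, e2, e3⟩ := h1 _ _ hne
  have hCD : C (eIdx hn m 0) (finSucc hn (eIdx hn m q)) = - D (eIdx hn m 0) (eIdx hn m q) :=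
    e2.symm.trans e3
  rw [eIdx_pred hn hm1 hq1 (le_of_lt hq)] at hCD
  rw [hCD]
  abel

include h1 h2 in
theorem final_sum {m : ℕ} (hm1 : 1 ≤ m) (hm : m ≤ n)
    (G H : ℕ → Matrix (Fin N) (Fin N) ℝ) :
    (∑ a : Fin n, ∑ b : Fin n,
      (tf (A (eIdx hn m a.val) (eIdx hn m b.val) (G (b.val+1))) (H (a.val+1))
        - tf (D (eIdx hn m a.val) (eIdx hn m b.val) (G b.val)) (H a.val)
        + tf (B (eIdx hn m a.val) (eIdx hn m b.val) (G b.val)) (H (a.val+1))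
        - tf (C (eIdx hn m a.val) (eIdx hn m b.val) (G (b.val+1))) (H a.val)))
    = tf (A (eIdx hn m (n-1)) (eIdx hn m (n-1)) (G n)) (H n)
      - tf (D (eIdx hn m 0) (eIdx hn m 0) (G 0)) (H 0)
      + tf (B (eIdx hn m (n-1)) (eIdx hn m 0) (G 0)) (H n)
      - tf (C (eIdx hn m 0) (eIdx hn m (n-1)) (G n)) (H 0) := by
  have hrange : (∑ a : Fin n, ∑ b : Fin n,
      (tf (A (eIdx hn m a.val) (eIdx hn m b.val) (G (b.val+1))) (H (a.val+1))
        - tf (D (eIdx hn m a.val) (eIdx hn m b.val) (G b.val)) (H a.val)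
        + tf (B (eIdx hn m a.val) (eIdx hn m b.val) (G b.val)) (H (a.val+1))
        - tf (C (eIdx hn m a.val) (eIdx hn m b.val) (G (b.val+1))) (H a.val)))
      = ∑ a ∈ Finset.range n, ∑ b ∈ Finset.range n,
      (tf (A (eIdx hn m a) (eIdx hn m b) (G (b+1))) (H (a+1))
        - tf (D (eIdx hn m a) (eIdx hn m b) (G b)) (H a)
        + tf (B (eIdx hn m a) (eIdx hn m b) (G b)) (H (a+1))
        - tf (C (eIdx hn m a) (eIdx hn m b) (G (b+1))) (H a)) := by
    rw [← Fin.sum_univ_eq_sum_range (fun a => ∑ b ∈ Finset.range n,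
      (tf (A (eIdx hn m a) (eIdx hn m b) (G (b+1))) (H (a+1))
        - tf (D (eIdx hn m a) (eIdx hn m b) (G b)) (H a)
        + tf (B (eIdx hn m a) (eIdx hn m b) (G b)) (H (a+1))
        - tf (C (eIdx hn m a) (eIdx hn m b) (G (b+1))) (H a))) n]
    exact Finset.sum_congr rfl fun a _ =>
      (Fin.sum_univ_eq_sum_range (fun b =>
      (tf (A (eIdx hn m a.val) (eIdx hn m b) (G (b+1))) (H (a.val+1))
        - tf (D (eIdx hn m a.val) (eIdx hn m b) (G b)) (H a.val)
        + tf (B (eIdx hn m a.val) (eIdx hn m b) (G b)) (H (a.val+1))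
        - tf (C (eIdx hn m a.val) (eIdx hn m b) (G (b+1))) (H a.val))) n)
  rw [hrange]
  have := grid_collapse n hn
    (fun p q => tf (A (eIdx hn m (p-1)) (eIdx hn m (q-1)) (G q)) (H p))
    (fun p q => tf (B (eIdx hn m (p-1)) (eIdx hn m q) (G q)) (H p))
    (fun p q => tf (C (eIdx hn m p) (eIdx hn m (q-1)) (G q)) (H p))
    (fun p q => tf (D (eIdx hn m p) (eIdx hn m q) (G q)) (H p))
    (fun p q hp1 hp hq1 hq =>
      tf_op4 (op_mid hn A B C D h1 h2 hm1 hp1 (le_of_lt hp) hq1 (le_of_lt hq)) (G q) (H p))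
    (fun q hq1 hq => tf_op2_add (op_top hn A B C D h1 hm1 hq1 hq) (G q) (H n))
    (fun p hp1 hp => tf_op2_sub (op_right hn A B C D h1 hm1 hp1 hp) (G n) (H p))
    (fun p hp1 hp => tf_op2_sub (op_left hn A B C D h1 hm1 hp1 hp) (G 0) (H p))
    (fun q hq1 hq => tf_op2_add (op_bottom hn A B C D h1 hm1 hq1 hq) (G q) (H 0))
  exact this

end Ops
end S11


open S11 in
theorem statement11 (N n : ℕ) (hN : 1 ≤ N) (hn : 1 ≤ n)
    (A B C D : Fin n → Fin n → (Matrix (Fin N) (Fin N) ℝ →ₗ[ℝ] Matrix (Fin N) (Fin N) ℝ))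
    -- skew-symmetry assumptions (A_{ij})* = −A_{ji}, (D_{ij})* = −D_{ji}, (B_{ij})* = C_{ji}
    (hA : ∀ i j X Y, tf (A i j X) Y = - tf X (A j i Y))
    (hD : ∀ i j X Y, tf (D i j X) Y = - tf X (D j i Y))
    (hBC : ∀ i j X Y, tf (B i j X) Y = tf X (C j i Y))
    -- A_{i+1,j+1} = −B_{i+1,j} = C_{i,j+1} = −D_{i,j} for i ≠ j (indices mod n)
    (h1 : ∀ i j : Fin n, i ≠ j →
      A (finSucc hn i) (finSucc hn j) = - B (finSucc hn i) j
        ∧ A (finSucc hn i) (finSucc hn j) = C i (finSucc hn j)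
        ∧ A (finSucc hn i) (finSucc hn j) = - D i j)
    -- A_{j+1,j+1} − D_{j,j} + B_{j+1,j} − C_{j,j+1} = 0 for all j (indices mod n)
    (h2 : ∀ j : Fin n,
      A (finSucc hn j) (finSucc hn j) - D j j + B (finSucc hn j) j - C j (finSucc hn j) = 0) :
    -- each map 𝐮 ↦ T_j = u_j⋯u_1⬝u_n⋯u_{j+1} is Poisson (here j 1-based = j.val + 1)
    ∀ (j : Fin n) (φ ψ : Matrix (Fin N) (Fin N) ℝ → ℝ),
      ContDiff ℝ (⊤ : ℕ∞) φ → ContDiff ℝ (⊤ : ℕ∞) ψ →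
      ∀ u : Fin n → Matrix (Fin N) (Fin N) ℝ,
        bigPB A B C D (fun w => φ (tmat w (j.val + 1))) (fun w => ψ (tmat w (j.val + 1))) u
          = pb (A (finSucc hn j) (finSucc hn j)) (B (finSucc hn j) j)
              (C j (finSucc hn j)) (D j j) φ ψ (tmat u (j.val + 1)) := by
  intro j φ ψ hφc hψc u
  have hφ : Differentiable ℝ φ := hφc.differentiable (by simp)
  have hψ : Differentiable ℝ ψ := hψc.differentiable (by simp)
  have hm1 : 1 ≤ j.val + 1 := Nat.succ_le_succ (Nat.zero_le _)
  have hm : j.val + 1 ≤ n := j.isLt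
  have hfunφ : (fun w : Fin n → Matrix (Fin N) (Fin N) ℝ => φ (tmat w (j.val + 1)))
      = fun w => φ (lprod' (theList n (j.val + 1)) w) :=
    funext fun w => by rw [tmat_eq_lprod']
  have hfunψ : (fun w : Fin n → Matrix (Fin N) (Fin N) ℝ => ψ (tmat w (j.val + 1)))
      = fun w => ψ (lprod' (theList n (j.val + 1)) w) :=
    funext fun w => by rw [tmat_eq_lprod']
  rw [hfunφ, hfunψ, tmat_eq_lprod' u (j.val + 1)]
  set T : Matrix (Fin N) (Fin N) ℝ := lprod' (theList n (j.val + 1)) u with hT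
  obtain ⟨G, hGdef⟩ : ∃ G : ℕ → Matrix (Fin N) (Fin N) ℝ,
      G = fun t => (((theList n (j.val+1)).map u).drop t).prod * grad φ T
        * (((theList n (j.val+1)).map u).take t).prod := ⟨_, rfl⟩
  obtain ⟨H, hHdef⟩ : ∃ H : ℕ → Matrix (Fin N) (Fin N) ℝ,
      H = fun t => (((theList n (j.val+1)).map u).drop t).prod * grad ψ T
        * (((theList n (j.val+1)).map u).take t).prod := ⟨_, rfl⟩
  have hGt : ∀ t : ℕ, G t = (((theList n (j.val+1)).map u).drop t).prod * grad φ T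
      * (((theList n (j.val+1)).map u).take t).prod := fun t => by rw [hGdef]
  have hHt : ∀ t : ℕ, H t = (((theList n (j.val+1)).map u).drop t).prod * grad ψ T
      * (((theList n (j.val+1)).map u).take t).prod := fun t => by rw [hHdef]
  have hlen : ((theList n (j.val+1)).map u).length = n := by
    rw [List.length_map, length_theList _ hm]
  have hG0 : G 0 = dr φ T := by
    rw [hGt 0]
    simp [dr, hT, lprod']
  have hGn : G n = dl φ T := by
    rw [hGt n, List.drop_eq_nil_of_le (le_of_eq hlen), List.take_of_length_le (le_of_eq hlen)]
    simp [dl, hT, lprod']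
  have hH0 : H 0 = dr ψ T := by
    rw [hHt 0]
    simp [dr, hT, lprod']
  have hHn : H n = dl ψ T := by
    rw [hHt n, List.drop_eq_nil_of_le (le_of_eq hlen), List.take_of_length_le (le_of_eq hlen)]
    simp [dl, hT, lprod']
  have hbij : Function.Bijective (fun t : Fin n => eIdx hn (j.val + 1) t.val) :=
    Finite.injective_iff_bijective.mp fun p q h =>
      Fin.ext (eIdx_inj hn hm1 p.isLt q.isLt h)
  simp only [bigPB, pb]
  rw [← Function.Bijective.sum_comp hbij]
  trans (∑ a : Fin n, ∑ b : Fin n,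
      (tf (A (eIdx hn (j.val+1) a.val) (eIdx hn (j.val+1) b.val) (G (b.val+1))) (H (a.val+1))
        - tf (D (eIdx hn (j.val+1) a.val) (eIdx hn (j.val+1) b.val) (G b.val)) (H a.val)
        + tf (B (eIdx hn (j.val+1) a.val) (eIdx hn (j.val+1) b.val) (G b.val)) (H (a.val+1))
        - tf (C (eIdx hn (j.val+1) a.val) (eIdx hn (j.val+1) b.val) (G (b.val+1))) (H a.val)))
  · refine Finset.sum_congr rfl fun a _ => ?_
    rw [← Function.Bijective.sum_comp hbij]
    refine Finset.sum_congr rfl fun b _ => ?_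
    beta_reduce
    rw [ddj_eq hn hm1 hm φ hφ u b.isLt, ddj'_eq hn hm1 hm φ hφ u b.isLt,
        ddj_eq hn hm1 hm ψ hψ u a.isLt, ddj'_eq hn hm1 hm ψ hψ u a.isLt,
        ← hT, ← hGt b.val, ← hGt (b.val+1), ← hHt a.val, ← hHt (a.val+1)]
  · rw [final_sum hn A B C D h1 h2 hm1 hm G H,
        eIdx_last hn j, eIdx_zero hn j, hG0, hGn, hH0, hHn]
end
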